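/- arXiv:1910.01611 — 8 statements merged into one kernel-verified Lean document; each statement's English description precedes it below -/
import Mathlib

section
/- Let m be a positive integer and let H be the centralizer in S_{2m} of h₀ = (1 2)(3 4)⋯(2m−1 2m). Then every double coset HgH in H\S_{2m}/H contains a representative x that fixes every odd number in {1,2,...,2m}, i.e., x is supported on the even integers {2,4,...,2m}. -/
/-!
We model the set `{1, 2, ..., 2m}` as `Fin m × Fin 2`, where `(k, 0)` corresponds to the
odd number `2k+1` and `(k, 1)` corresponds to the even number `2k+2` (for `k = 0, ..., m-1`).
Under this identification, `h₀ = (1 2)(3 4)⋯(2m−1 2m)` is the permutation swapping the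
second coordinate, `H` is its centralizer, and a permutation is supported on the even
integers `{2, 4, ..., 2m}` iff it fixes every point `(k, 0)`.
-/

/-- `h₀ = (1 2)(3 4)⋯(2m−1 2m)`. -/
def pairingPerm (m : ℕ) : Equiv.Perm (Fin m × Fin 2) :=
  Equiv.prodCongr (Equiv.refl (Fin m)) (Equiv.swap 0 1)

/-- `H`, the centralizer of `h₀` in `S_{2m}`. -/
def Hcent (m : ℕ) : Subgroup (Equiv.Perm (Fin m × Fin 2)) :=
  Subgroup.centralizer {pairingPerm m}

section Aux

def blockPerm {m : ℕ} (σ : Equiv.Perm (Fin m)) (u : Fin m → Equiv.Perm (Fin 2)) :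
    Equiv.Perm (Fin m × Fin 2) where
  toFun x := (σ x.1, u x.1 x.2)
  invFun x := (σ.symm x.1, (u (σ.symm x.1)).symm x.2)
  left_inv := by rintro ⟨k, i⟩; simp
  right_inv := by rintro ⟨k, i⟩; simp

lemma swap_comm2 : ∀ (u : Equiv.Perm (Fin 2)) (i : Fin 2),
    u (Equiv.swap 0 1 i) = Equiv.swap 0 1 (u i) := by decide

lemma blockPerm_mem {m : ℕ} (σ : Equiv.Perm (Fin m)) (u : Fin m → Equiv.Perm (Fin 2)) :
    blockPerm σ u ∈ Hcent m := by
  rw [Hcent, Subgroup.mem_centralizer_iff]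
  rintro h hh
  rw [Set.mem_singleton_iff] at hh
  subst hh
  apply Equiv.ext
  rintro ⟨k, i⟩
  simp [pairingPerm, blockPerm, Equiv.Perm.mul_apply, swap_comm2]


theorem exists_coloring {X : Type*} (τ c : Equiv.Perm X)
    (hτ2 : τ * τ = 1) (hc2 : c * c = 1)
    (hτf : ∀ x, τ x ≠ x) (hcf : ∀ x, c x ≠ x) :
    ∃ f : X → Fin 2, (∀ x, f (τ x) ≠ f x) ∧ (∀ x, f (c x) ≠ f x) := by
  classical
  set ρ : Equiv.Perm X := τ * c with hρ
  have hτinv : τ⁻¹ = τ := inv_eq_of_mul_eq_one_right hτ2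
  have hcinv : c⁻¹ = c := inv_eq_of_mul_eq_one_right hc2
  have hττ : ∀ x : X, τ (τ x) = x := fun x => by
    rw [← Equiv.Perm.mul_apply, hτ2, Equiv.Perm.one_apply]
  have hconj : τ * ρ * τ⁻¹ = ρ⁻¹ := by
    rw [hρ, mul_inv_rev, hτinv, hcinv]
    calc τ * (τ * c) * τ = (τ * τ) * (c * τ) := by group
    _ = c * τ := by rw [hτ2, one_mul]
  have hzconj : ∀ j : ℤ, τ * ρ ^ j = ρ ^ (-j) * τ := by
    intro j
    have h1 : (τ * ρ * τ⁻¹) ^ j = τ * ρ ^ j * τ⁻¹ := conj_zpow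
    rw [hconj] at h1
    have : ρ ^ (-j) = τ * ρ ^ j * τ⁻¹ := by rw [← h1, zpow_neg, inv_zpow]
    rw [this, hτinv, mul_assoc (τ * ρ ^ j), hτ2, mul_one]
  have hzconjx : ∀ (j : ℤ) (x : X), τ ((ρ ^ j) x) = (ρ ^ (-j)) (τ x) := by
    intro j x
    rw [← Equiv.Perm.mul_apply, hzconj j, Equiv.Perm.mul_apply]
  -- key parity lemma
  have hkey : ∀ (x : X) (k : ℤ), (ρ ^ k) x ≠ τ x := by
    intro x k hk
    rcases Int.even_or_odd k with ⟨j, hj⟩ | ⟨j, hj⟩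
    · -- k = j + j
      apply hτf ((ρ ^ j) x)
      rw [hzconjx j x, ← hk, hj, ← Equiv.Perm.mul_apply, ← zpow_add]
      congr 1
      ring_nf
    · -- k = 2j + 1
      have hy : τ ((ρ ^ j) x) = ρ ((ρ ^ j) x) := by
        rw [hzconjx j x, ← hk, hj, ← Equiv.Perm.mul_apply, ← zpow_add]
        have h5 : -j + (2 * j + 1) = 1 + j := by ring
        rw [h5, zpow_add, zpow_one, Equiv.Perm.mul_apply]
      apply hcf ((ρ ^ j) x)
      have : ρ ((ρ ^ j) x) = τ (c ((ρ ^ j) x)) := by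
        rw [hρ, Equiv.Perm.mul_apply]
      rw [this] at hy
      exact (τ.injective hy).symm
  -- equivariance
  have hequiv : ∀ a b : X, ρ.SameCycle a b → ρ.SameCycle (τ a) (τ b) := by
    rintro a b ⟨n, hn⟩
    exact ⟨-n, by rw [← hzconjx n a, hn]⟩
  -- setoid
  set R : X → X → Prop := fun x y => ρ.SameCycle x y ∨ ρ.SameCycle x (τ y) with hR
  have hRrefl : ∀ x, R x x := fun x => Or.inl (Equiv.Perm.SameCycle.refl ρ x)
  have hRsymm : ∀ {x y}, R x y → R y x := by
    rintro x y (h | h)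
    · exact Or.inl h.symm
    · refine Or.inr ?_
      have := hequiv _ _ h
      rw [hττ] at this
      exact this.symm
  have hRtrans : ∀ {x y z}, R x y → R y z → R x z := by
    rintro x y z (h1 | h1) (h2 | h2)
    · exact Or.inl (h1.trans h2)
    · exact Or.inr (h1.trans h2)
    · exact Or.inr (h1.trans (hequiv _ _ h2))
    · have := hequiv _ _ h2
      rw [hττ] at this
      exact Or.inl (h1.trans this)
  let s : Setoid X := ⟨R, hRrefl, hRsymm, hRtrans⟩
  let rep : X → X := fun x => (Quotient.mk s x).out
  have hrep_r : ∀ x, R (rep x) x := fun x =>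
    Quotient.exact (s := s) (Quotient.out_eq (Quotient.mk s x))
  have hrep_eq : ∀ x y, R x y → rep x = rep y := fun x y h =>
    congrArg Quotient.out (Quotient.sound h)
  have hone : ∀ x, ¬(ρ.SameCycle (rep x) x ∧ ρ.SameCycle (rep x) (τ x)) := by
    rintro x ⟨h1, h2⟩
    obtain ⟨k, hk⟩ := h1.symm.trans h2
    exact hkey x k hk
  let f : X → Fin 2 := fun x => if ρ.SameCycle (rep x) x then 0 else 1
  have hfτ : ∀ x, f (τ x) ≠ f x := by
    intro x
    have hxy : R x (τ x) := Or.inr (by rw [hττ])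
    have hre : rep (τ x) = rep x := (hrep_eq x (τ x) hxy).symm
    by_cases h : ρ.SameCycle (rep x) x
    · have h2 : ¬ ρ.SameCycle (rep (τ x)) (τ x) := by
        rw [hre]; exact fun hh => hone x ⟨h, hh⟩
      simp only [f, if_pos h, if_neg h2]
      try decide
    · have h2 : ρ.SameCycle (rep (τ x)) (τ x) := by
        rw [hre]
        rcases hrep_r x with h' | h'
        · exact absurd h' h
        · exact h'
      simp only [f, if_pos h2, if_neg h]
      try decide
  have hfρ : ∀ x, f (ρ x) = f x := by
    intro x
    have hsc : ρ.SameCycle x (ρ x) := ⟨1, by rw [zpow_one]⟩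
    have hre : rep (ρ x) = rep x := (hrep_eq x (ρ x) (Or.inl hsc)).symm
    by_cases h : ρ.SameCycle (rep x) x
    · have h2 : ρ.SameCycle (rep (ρ x)) (ρ x) := by rw [hre]; exact h.trans hsc
      simp only [f, if_pos h, if_pos h2]
    · have h2 : ¬ ρ.SameCycle (rep (ρ x)) (ρ x) := by
        rw [hre]; exact fun hh => h (hh.trans hsc.symm)
      simp only [f, if_neg h, if_neg h2]
  have hfc : ∀ x, f (c x) ≠ f x := by
    intro x
    have hcx : c x = τ (ρ x) := by
      rw [hρ, Equiv.Perm.mul_apply, hττ]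
    rw [hcx]
    intro hh
    exact hfτ (ρ x) (hh.trans (hfρ x).symm)
  exact ⟨f, hfτ, hfc⟩

end Aux

/-- Every double coset `HgH` has a representative `x` fixing every odd number,
i.e. supported on the even integers `{2, 4, ..., 2m}`. -/
theorem doset_rep_supported_on_evens (m : ℕ) (hm : 0 < m)
    (g : Equiv.Perm (Fin m × Fin 2)) :
    ∃ x : Equiv.Perm (Fin m × Fin 2),
      (∃ h₁ ∈ Hcent m, ∃ h₂ ∈ Hcent m, x = h₁ * g * h₂) ∧
      ∀ k : Fin m, x (k, (0 : Fin 2)) = (k, (0 : Fin 2)) := by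
  classical
  set τ : Equiv.Perm (Fin m × Fin 2) := pairingPerm m with hτdef
  have hswap : ∀ i : Fin 2, Equiv.swap (0 : Fin 2) 1 (Equiv.swap (0 : Fin 2) 1 i) = i := by
    decide
  have hswapne : ∀ i : Fin 2, Equiv.swap (0 : Fin 2) 1 i ≠ i := by decide
  have hτapp : ∀ (k : Fin m) (i : Fin 2), τ (k, i) = (k, Equiv.swap 0 1 i) := by
    intro k i; rfl
  have hτ2 : τ * τ = 1 := by
    apply Equiv.ext
    rintro ⟨k, i⟩
    simp [Equiv.Perm.mul_apply, hτapp, hswap]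
  have hτf : ∀ x : Fin m × Fin 2, τ x ≠ x := by
    rintro ⟨k, i⟩ h
    rw [hτapp] at h
    exact hswapne i (congrArg Prod.snd h)
  set c : Equiv.Perm (Fin m × Fin 2) := g * τ * g⁻¹ with hcdef
  have hcapp : ∀ x, c x = g (τ (g⁻¹ x)) := by
    intro x
    rw [hcdef, Equiv.Perm.mul_apply, Equiv.Perm.mul_apply]
  have hc2 : c * c = 1 := by
    rw [hcdef]
    have : g * τ * g⁻¹ * (g * τ * g⁻¹) = g * (τ * τ) * g⁻¹ := by group
    rw [this, hτ2, mul_one, mul_inv_cancel]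
  have hcf : ∀ x, c x ≠ x := by
    intro x h
    rw [hcapp] at h
    apply hτf (g⁻¹ x)
    have := congrArg (fun y => g⁻¹ y) h
    simpa using this
  obtain ⟨f, hfτ, hfc⟩ := exists_coloring τ c hτ2 hc2 hτf hcf
  have fin2a : ∀ a : Fin 2, a ≠ 0 → a = 1 := by decide
  have fin2b : ∀ a : Fin 2, a ≠ 1 → a = 0 := by decide
  have hA0 : ∀ j : Fin m, f (j, 1) ≠ f (j, 0) := by
    intro j
    have h1 := hfτ (j, 0)
    rw [hτapp] at h1
    simpa using h1
  have hA : ∀ (j : Fin m) (a b : Fin 2), f (j, a) = f (j, b) → a = b := by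
    intro j a b hab
    fin_cases a <;> fin_cases b
    · rfl
    · exact absurd hab.symm (hA0 j)
    · exact absurd hab (hA0 j)
    · rfl
  have hB : ∀ k : Fin m, f (g (k, 1)) ≠ f (g (k, 0)) := by
    intro k
    have h1 := hfc (g (k, 0))
    have h2 : c (g (k, 0)) = g (k, 1) := by
      rw [hcapp]
      simp [hτapp]
    rwa [h2] at h1
  let e₂ : Fin m → Equiv.Perm (Fin 2) := fun k => if f (g (k, 0)) = 0 then 1 else Equiv.swap 0 1
  let h₂ : Equiv.Perm (Fin m × Fin 2) := blockPerm 1 e₂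
  have hh₂ : ∀ k : Fin m, h₂ (k, 0) = (k, e₂ k 0) := by
    intro k
    show ((1 : Equiv.Perm (Fin m)) k, e₂ k 0) = (k, e₂ k 0)
    rw [Equiv.Perm.one_apply]
  set w : Equiv.Perm (Fin m × Fin 2) := g * h₂ with hwdef
  have hw : ∀ k : Fin m, w (k, 0) = g (k, e₂ k 0) := by
    intro k
    rw [hwdef, Equiv.Perm.mul_apply, hh₂]
  have hw0 : ∀ k : Fin m, f (w (k, 0)) = 0 := by
    intro k
    rw [hw]
    by_cases h : f (g (k, 0)) = 0
    · have he : e₂ k = 1 := if_pos h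
      rw [he]
      simpa using h
    · have he : e₂ k = Equiv.swap 0 1 := if_neg h
      rw [he, Equiv.swap_apply_left]
      exact fin2b _ (fun hh => (hB k) (hh.trans (fin2a _ h).symm))
  let p : Fin m → Fin m := fun k => (w (k, 0)).1
  let s' : Fin m → Fin 2 := fun k => (w (k, 0)).2
  have hps : ∀ k, w (k, 0) = (p k, s' k) := fun k => rfl
  have hpinj : Function.Injective p := by
    intro k k' hkk
    have hsnd : s' k = s' k' := by
      apply hA (p k)
      have e1 : f (p k, s' k) = 0 := by rw [← hps]; exact hw0 k
      have e2 : f (p k, s' k') = 0 := by rw [hkk, ← hps]; exact hw0 k'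
      rw [e1, e2]
    have hww : w (k, 0) = w (k', 0) := by rw [hps, hps, hkk, hsnd]
    have := w.injective hww
    exact (Prod.ext_iff.mp this).1
  let π : Fin m ≃ Fin m := Equiv.ofBijective p (Finite.injective_iff_bijective.mp hpinj)
  have hπk : ∀ k, π k = p k := fun k => rfl
  have hπ : ∀ k, π.symm (p k) = k := by
    intro k
    rw [← hπk]
    exact π.symm_apply_apply k
  let u : Fin m → Equiv.Perm (Fin 2) := fun j => if s' (π.symm j) = 0 then 1 else Equiv.swap 0 1
  let h₁ : Equiv.Perm (Fin m × Fin 2) := blockPerm π.symm u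
  have hfix : ∀ k : Fin m, h₁ (w (k, 0)) = (k, 0) := by
    intro k
    rw [hps]
    show (π.symm (p k), u (p k) (s' k)) = (k, 0)
    rw [hπ]
    have hu : u (p k) = if s' k = 0 then 1 else Equiv.swap 0 1 := by
      show (if s' (π.symm (p k)) = 0 then 1 else Equiv.swap 0 1) = _
      rw [hπ]
    rw [hu]
    by_cases h : s' k = 0
    · rw [if_pos h]
      simp [h]
    · rw [if_neg h, fin2a _ h, Equiv.swap_apply_right]
  refine ⟨h₁ * g * h₂, ⟨h₁, blockPerm_mem _ _, h₂, blockPerm_mem _ _, rfl⟩, ?_⟩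
  intro k
  have hh : (h₁ * g * h₂) (k, (0 : Fin 2)) = h₁ (w (k, 0)) := by
    rw [hwdef, Equiv.Perm.mul_apply, Equiv.Perm.mul_apply, Equiv.Perm.mul_apply]
  rw [hh, hfix]
end

section
/- Let m be a positive integer, H the centralizer in S_{2m} of h₀ = (1 2)(3 4)⋯(2m−1 2m), and let M′ = {2,4,...,2m}. For two permutations x₁, x₂ ∈ S_{2m} each supported on M′ (fixing all odd numbers), one has x₂ ∈ Hx₁H if and only if x₁ and x₂ are conjugate by a permutation supported on M′. In other words, each conjugacy class of Sym(M′) is contained in a single double coset of H\S_{2m}/H, distinct conjugacy classes lie in distinct double cosets, and every double coset intersects Sym(M′) in exactly one conjugacy class of Sym(M′). -/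
namespace DosetAux

variable {m : ℕ}

lemma fin2_cases (i : Fin 2) : i = 0 ∨ i = 1 :=
  match i with | 0 => Or.inl rfl | 1 => Or.inr rfl

def rowP (σ τ : Equiv.Perm (Fin m)) : Equiv.Perm (Fin m × Fin 2) :=
  Equiv.prodCongrLeft (fun i => if i = 0 then σ else τ)

@[simp] lemma rowP_apply0 (σ τ : Equiv.Perm (Fin m)) (k : Fin m) :
    rowP σ τ (k, (0 : Fin 2)) = (σ k, 0) := by simp [rowP]

@[simp] lemma rowP_apply1 (σ τ : Equiv.Perm (Fin m)) (k : Fin m) :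
    rowP σ τ (k, (1 : Fin 2)) = (τ k, 1) := by simp [rowP]

lemma rowP_mul (a b c d : Equiv.Perm (Fin m)) :
    rowP a b * rowP c d = rowP (a * c) (b * d) := by
  apply Equiv.ext
  rintro ⟨k, i⟩
  rcases fin2_cases i with rfl | rfl <;> simp [Equiv.Perm.mul_apply]

@[simp] lemma rowP_one : (rowP 1 1 : Equiv.Perm (Fin m × Fin 2)) = 1 := by
  apply Equiv.ext
  rintro ⟨k, i⟩
  rcases fin2_cases i with rfl | rfl <;> simp

lemma rowP_inv (a b : Equiv.Perm (Fin m)) : (rowP a b)⁻¹ = rowP a⁻¹ b⁻¹ := by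
  rw [inv_eq_iff_mul_eq_one, rowP_mul]
  simp

@[simp] lemma pairingPerm_apply0 (k : Fin m) :
    pairingPerm m (k, (0 : Fin 2)) = (k, 1) := by
  simp [pairingPerm]

@[simp] lemma pairingPerm_apply1 (k : Fin m) :
    pairingPerm m (k, (1 : Fin 2)) = (k, 0) := by
  simp [pairingPerm]

lemma pairingPerm_mul_rowP (σ τ : Equiv.Perm (Fin m)) :
    pairingPerm m * rowP σ τ = rowP τ σ * pairingPerm m := by
  apply Equiv.ext
  rintro ⟨k, i⟩
  rcases fin2_cases i with rfl | rfl <;> simp [Equiv.Perm.mul_apply]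

lemma rowP_mem_Hcent (ρ : Equiv.Perm (Fin m)) : rowP ρ ρ ∈ Hcent m := by
  rw [Hcent, Subgroup.mem_centralizer_singleton_iff, pairingPerm_mul_rowP]

/-- Row 0 as a subtype. -/
def e0 : Fin m ≃ {p : Fin m × Fin 2 // p.2 = 0} where
  toFun k := ⟨(k, 0), rfl⟩
  invFun p := p.1.1
  left_inv k := rfl
  right_inv := by rintro ⟨⟨k, i⟩, h⟩; simp at h; simp [h]

def e1 : Fin m ≃ {p : Fin m × Fin 2 // p.2 = 1} where
  toFun k := ⟨(k, 1), rfl⟩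
  invFun p := p.1.1
  left_inv k := rfl
  right_inv := by rintro ⟨⟨k, i⟩, h⟩; simp at h; simp [h]

lemma rowP_left_extend (σ : Equiv.Perm (Fin m)) :
    rowP σ 1 = σ.extendDomain e0 := by
  apply Equiv.ext
  rintro ⟨k, i⟩
  rcases fin2_cases i with rfl | rfl
  · rw [Equiv.Perm.extendDomain_apply_subtype σ e0 (show ((k, (0:Fin 2)) : Fin m × Fin 2).2 = 0 from rfl)]
    simp [e0]
  · rw [Equiv.Perm.extendDomain_apply_not_subtype σ e0 (by simp)]
    simp

lemma rowP_right_extend (τ : Equiv.Perm (Fin m)) :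
    rowP 1 τ = τ.extendDomain e1 := by
  apply Equiv.ext
  rintro ⟨k, i⟩
  rcases fin2_cases i with rfl | rfl
  · rw [Equiv.Perm.extendDomain_apply_not_subtype τ e1 (by simp)]
    simp
  · rw [Equiv.Perm.extendDomain_apply_subtype τ e1 (show ((k, (1:Fin 2)) : Fin m × Fin 2).2 = 1 from rfl)]
    simp [e1]

lemma rowP_disjoint (σ τ : Equiv.Perm (Fin m)) :
    Equiv.Perm.Disjoint (rowP σ 1) (rowP 1 τ) := by
  rintro ⟨k, i⟩
  rcases fin2_cases i with rfl | rfl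
  · right; simp
  · left; simp

lemma cycleType_rowP (σ τ : Equiv.Perm (Fin m)) :
    (rowP σ τ).cycleType = σ.cycleType + τ.cycleType := by
  have h : rowP σ τ = rowP σ 1 * rowP 1 τ := by rw [rowP_mul]; simp
  rw [h, (rowP_disjoint σ τ).cycleType_mul, rowP_left_extend, rowP_right_extend,
    Equiv.Perm.cycleType_extendDomain, Equiv.Perm.cycleType_extendDomain]

lemma exists_rowP (x : Equiv.Perm (Fin m × Fin 2))
    (hx : ∀ k : Fin m, x (k, (0 : Fin 2)) = (k, 0)) :
    ∃ τ : Equiv.Perm (Fin m), x = rowP 1 τ := by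
  have hx' : ∀ k : Fin m, x⁻¹ (k, (0 : Fin 2)) = (k, 0) := by
    intro k
    apply x.injective
    simp [hx]
  have snd1 : ∀ (y : Equiv.Perm (Fin m × Fin 2)),
      (∀ k : Fin m, y (k, (0 : Fin 2)) = (k, 0)) →
      ∀ j : Fin m, y (j, (1 : Fin 2)) = ((y (j, 1)).1, 1) := by
    intro y hy j
    rcases hp : y (j, (1 : Fin 2)) with ⟨a, b⟩
    rcases fin2_cases b with rfl | rfl
    · exfalso
      have : y (j, (1 : Fin 2)) = y (a, 0) := by rw [hp, hy]
      have := y.injective this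
      simp at this
    · simp [hp]
  have h1 := snd1 x hx
  have h1' := snd1 x⁻¹ hx'
  refine ⟨⟨fun j => (x (j, 1)).1, fun j => (x⁻¹ (j, 1)).1, ?_, ?_⟩, ?_⟩
  · intro j
    simp only
    conv_lhs => rw [← h1 j]
    simp
  · intro j
    simp only
    conv_lhs => rw [← h1' j]
    simp
  · apply Equiv.ext
    rintro ⟨k, i⟩
    rcases fin2_cases i with rfl | rfl
    · rw [hx k, rowP_apply0]; simp
    · rw [rowP_apply1]; exact h1 k

end DosetAux

open DosetAux in
/-- For permutations `x₁, x₂` supported on the even integers `M′`, `x₂` lies in the double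
coset `H x₁ H` iff `x₁` and `x₂` are conjugate by a permutation supported on `M′`.
Thus each conjugacy class of `Sym(M′)` lies in a single double coset, distinct classes lie
in distinct double cosets, and every double coset meets `Sym(M′)` in one conjugacy class. -/
theorem doset_iff_conjugate_on_evens (m : ℕ) (hm : 0 < m)
    (x₁ x₂ : Equiv.Perm (Fin m × Fin 2))
    (hx₁ : ∀ k : Fin m, x₁ (k, (0 : Fin 2)) = (k, (0 : Fin 2)))
    (hx₂ : ∀ k : Fin m, x₂ (k, (0 : Fin 2)) = (k, (0 : Fin 2))) :
    (∃ h₁ ∈ Hcent m, ∃ h₂ ∈ Hcent m, x₂ = h₁ * x₁ * h₂) ↔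
      (∃ σ : Equiv.Perm (Fin m × Fin 2),
        (∀ k : Fin m, σ (k, (0 : Fin 2)) = (k, (0 : Fin 2))) ∧
        σ * x₁ * σ⁻¹ = x₂) := by
  obtain ⟨τ₁, rfl⟩ := exists_rowP x₁ hx₁
  obtain ⟨τ₂, rfl⟩ := exists_rowP x₂ hx₂
  constructor
  · rintro ⟨h₁, hh₁, h₂, hh₂, heq⟩
    set w := pairingPerm m with hw
    have c₁ : Commute h₁ w := (Subgroup.mem_centralizer_singleton_iff.mp hh₁)
    have c₂ : Commute h₂ w := (Subgroup.mem_centralizer_singleton_iff.mp hh₂)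
    have gcompute : ∀ τ : Equiv.Perm (Fin m),
        w * rowP 1 τ * w⁻¹ * (rowP 1 τ)⁻¹ = rowP τ τ⁻¹ := by
      intro τ
      have h1 : w * rowP 1 τ = rowP τ 1 * w := pairingPerm_mul_rowP 1 τ
      rw [h1, rowP_inv]
      have : rowP τ 1 * w * w⁻¹ = rowP τ 1 := by group
      rw [this, rowP_mul]
      simp
    have conj : w * rowP 1 τ₂ * w⁻¹ * (rowP 1 τ₂)⁻¹ =
        h₁ * (w * rowP 1 τ₁ * w⁻¹ * (rowP 1 τ₁)⁻¹) * h₁⁻¹ := by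
      rw [heq]
      have c₂' : h₂ * w⁻¹ = w⁻¹ * h₂ := c₂.inv_right.eq
      calc w * (h₁ * rowP 1 τ₁ * h₂) * w⁻¹ * (h₁ * rowP 1 τ₁ * h₂)⁻¹
          = (w * h₁) * rowP 1 τ₁ * (h₂ * w⁻¹) * (h₂⁻¹ * (rowP 1 τ₁)⁻¹ * h₁⁻¹) := by
            group
        _ = (h₁ * w) * rowP 1 τ₁ * (w⁻¹ * h₂) * (h₂⁻¹ * (rowP 1 τ₁)⁻¹ * h₁⁻¹) := by
            rw [← c₁.eq, c₂']
        _ = h₁ * (w * rowP 1 τ₁ * w⁻¹ * (rowP 1 τ₁)⁻¹) * h₁⁻¹ := by group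
    rw [gcompute, gcompute] at conj
    have hconj : IsConj (rowP τ₁ τ₁⁻¹) (rowP τ₂ τ₂⁻¹) :=
      isConj_iff.mpr ⟨h₁, by rw [conj]⟩
    have hct := Equiv.Perm.isConj_iff_cycleType_eq.mp hconj
    rw [cycleType_rowP, cycleType_rowP, Equiv.Perm.cycleType_inv,
      Equiv.Perm.cycleType_inv] at hct
    have hτ : τ₁.cycleType = τ₂.cycleType := by
      ext n
      have := congrArg (Multiset.count n) hct
      simp only [Multiset.count_add] at this
      omega
    obtain ⟨c, hc⟩ := isConj_iff.mp (Equiv.Perm.isConj_iff_cycleType_eq.mpr hτ)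
    refine ⟨rowP 1 c, fun k => by simp, ?_⟩
    rw [rowP_inv, rowP_mul, rowP_mul, ← hc]
    simp
  · rintro ⟨σ, hσ0, hσ⟩
    obtain ⟨ρ, rfl⟩ := exists_rowP σ hσ0
    refine ⟨rowP ρ ρ, rowP_mem_Hcent ρ, rowP ρ⁻¹ ρ⁻¹, rowP_mem_Hcent ρ⁻¹, ?_⟩
    rw [← hσ, rowP_inv, rowP_mul, rowP_mul, rowP_mul, rowP_mul]
    simp
end

section
/- Let m be a positive integer and H the centralizer in S_{2m} of h₀ = (1 2)(3 4)⋯(2m−1 2m). Then every double coset of S_{2m} with respect to H is self-inverse: for all g ∈ S_{2m}, Hg⁻¹H = HgH. -/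
section Aux

variable {α : Type*}

/-- Any two fixed-point-free involutions of a type are conjugate by an involution. -/
theorem exists_involution_conj (a b : Equiv.Perm α)
    (ha : a * a = 1) (hb : b * b = 1)
    (hfa : ∀ x, a x ≠ x) (hfb : ∀ x, b x ≠ x) :
    ∃ r : Equiv.Perm α, r * r = 1 ∧ r * a * r⁻¹ = b := by
  classical
  set p : Equiv.Perm α := b * a with hp
  have hainv : a⁻¹ = a := by
    rw [inv_eq_iff_mul_eq_one]; exact ha
  have hbinv : b⁻¹ = b := by
    rw [inv_eq_iff_mul_eq_one]; exact hb
  have haa : ∀ x, a (a x) = x := by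
    intro x
    have := congrArg (fun q => (q : Equiv.Perm α) x) ha
    simpa using this
  have hconj : ∀ n : ℤ, a * p ^ n * a = p ^ (-n) := by
    intro n
    have h1 : a * p * a⁻¹ = p⁻¹ := by
      rw [hainv, hp]
      calc a * (b * a) * a = a * b * (a * a) := by group
        _ = a * b := by rw [ha, mul_one]
        _ = a⁻¹ * b⁻¹ := by rw [hainv, hbinv]
        _ = (b * a)⁻¹ := by rw [mul_inv_rev]
    calc a * p ^ n * a = a * p ^ n * a⁻¹ := by rw [hainv]
      _ = (a * p * a⁻¹) ^ n := by rw [conj_zpow]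
      _ = (p⁻¹) ^ n := by rw [h1]
      _ = p ^ (-n) := by rw [inv_zpow, zpow_neg]
  -- pointwise versions
  have hap : ∀ (n : ℤ) (x : α), a ((p ^ n) x) = (p ^ (-n)) (a x) := by
    intro n x
    have h2 := congrArg (fun q : Equiv.Perm α => q (a x)) (hconj n)
    simp only [Equiv.Perm.mul_apply, haa] at h2
    exact h2
  have hcomp : ∀ (i j : ℤ) (y : α), (p ^ i) ((p ^ j) y) = (p ^ (i + j)) y := by
    intro i j y
    rw [zpow_add, Equiv.Perm.mul_apply]
  have hpb : p * a = b := by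
    rw [hp, mul_assoc, ha, mul_one]
  have hbp : ∀ (n : ℤ) (x : α), b ((p ^ n) x) = (p ^ (1 - n)) (a x) := by
    intro n x
    calc b ((p ^ n) x) = p (a ((p ^ n) x)) := by rw [← hpb]; rfl
      _ = p ((p ^ (-n)) (a x)) := by rw [hap]
      _ = (p ^ (1:ℤ)) ((p ^ (-n)) (a x)) := by rw [zpow_one]
      _ = (p ^ (1 + -n)) (a x) := hcomp _ _ _
      _ = (p ^ (1 - n)) (a x) := by rw [sub_eq_add_neg]
  -- the orbit equivalence relation of the dihedral group generated by `a` and `b`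
  have hRequiv : Equivalence (fun x y : α =>
      (∃ n : ℤ, y = (p ^ n) x) ∨ (∃ n : ℤ, y = (p ^ n) (a x))) := by
    constructor
    · intro x; exact Or.inl ⟨0, by simp⟩
    · intro x y hxy
      rcases hxy with ⟨n, rfl⟩ | ⟨n, rfl⟩
      · exact Or.inl ⟨-n, by rw [hcomp]; simp⟩
      · refine Or.inr ⟨n, ?_⟩
        rw [hap, haa, hcomp]; simp
    · intro x y z hxy hyz
      rcases hxy with ⟨n, rfl⟩ | ⟨n, rfl⟩ <;> rcases hyz with ⟨m, hz⟩ | ⟨m, hz⟩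
      · exact Or.inl ⟨m + n, by rw [hz, hcomp]⟩
      · refine Or.inr ⟨m + -n, ?_⟩
        rw [hz, hap, hcomp]
      · exact Or.inr ⟨m + n, by rw [hz, hcomp]⟩
      · refine Or.inl ⟨m + -n, ?_⟩
        rw [hz, hap, haa, hcomp]
  letI S : Setoid α := ⟨_, hRequiv⟩
  set ρ : α → α := fun x => (Quotient.mk'' x : Quotient S).out with hρdef
  have hρrel : ∀ x, S.r (ρ x) x := fun x => @Quotient.mk_out' α S x
  have hρ : ∀ x, (∃ n : ℤ, x = (p ^ n) (ρ x)) ∨ (∃ n : ℤ, x = (p ^ n) (a (ρ x))) :=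
    fun x => hρrel x
  have hρeq : ∀ x y, S.r x y → ρ y = ρ x := by
    intro x y h
    simp only [hρdef]
    exact congrArg Quotient.out (Quotient.sound' (hRequiv.symm h))
  have hρa : ∀ x, ρ (a x) = ρ x := fun x => hρeq x (a x) (Or.inr ⟨0, by simp⟩)
  have hρp : ∀ (n : ℤ) (x : α), ρ ((p ^ n) x) = ρ x :=
    fun n x => hρeq x _ (Or.inl ⟨n, rfl⟩)
  have hρρ : ∀ x, ρ (ρ x) = ρ x := fun x => hρeq x (ρ x) (hRequiv.symm (hρrel x))
  -- `a x` is never in the `p`-cycle of `x`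
  have hD : ∀ x, ¬∃ n : ℤ, a x = (p ^ n) x := by
    rintro x ⟨n, hn⟩
    rcases Int.even_or_odd n with ⟨i, hi⟩ | ⟨i, hi⟩
    · apply hfa ((p ^ i) x)
      calc a ((p ^ i) x) = (p ^ (-i)) (a x) := hap i x
        _ = (p ^ (-i)) ((p ^ n) x) := by rw [hn]
        _ = (p ^ (-i + n)) x := hcomp _ _ _
        _ = (p ^ i) x := by rw [show -i + n = i by omega]
    · apply hfb ((p ^ (i + 1)) x)
      calc b ((p ^ (i + 1)) x) = (p ^ (1 - (i + 1))) (a x) := hbp _ _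
        _ = (p ^ (-i)) ((p ^ n) x) := by rw [hn, show (1:ℤ) - (i + 1) = -i by ring]
        _ = (p ^ (-i + n)) x := hcomp _ _ _
        _ = (p ^ (i + 1)) x := by rw [show -i + n = i + 1 by omega]
  -- well-definedness of exponents
  have hwd : ∀ (c : α) (i j : ℤ), (p ^ i) c = (p ^ j) c →
      ∀ k : ℤ, (p ^ (k - i)) c = (p ^ (k - j)) c := by
    intro c i j h k
    have h2 := congrArg (fun y => (p ^ (k - i - j)) y) h
    simp only [hcomp] at h2
    rw [show k - i - j + i = k - j by ring, show k - i - j + j = k - i by ring] at h2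
    exact h2.symm
  -- the reflection
  set f : α → α := fun x =>
    if h : ∃ n : ℤ, x = (p ^ n) (ρ x) then (p ^ (0 - Classical.choose h)) (ρ x)
    else if h2 : ∃ n : ℤ, x = (p ^ n) (a (ρ x)) then
      (p ^ (1 - Classical.choose h2)) (a (ρ x))
    else x
    with hfdef
  have hE1 : ∀ (x : α) (n : ℤ), x = (p ^ n) (ρ x) → f x = (p ^ (0 - n)) (ρ x) := by
    intro x n hx
    have hex : ∃ n : ℤ, x = (p ^ n) (ρ x) := ⟨n, hx⟩
    simp only [hfdef]
    rw [dif_pos hex]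
    exact hwd (ρ x) _ n ((Classical.choose_spec hex).symm.trans hx) 0
  have hE2 : ∀ (x : α) (n : ℤ), x = (p ^ n) (a (ρ x)) →
      f x = (p ^ (1 - n)) (a (ρ x)) := by
    intro x n hx
    have hnot : ¬∃ m : ℤ, x = (p ^ m) (ρ x) := by
      rintro ⟨m, hm⟩
      apply hD (ρ x)
      refine ⟨m - n, ?_⟩
      have h3 := congrArg (fun y => (p ^ (-n)) y) (hx.symm.trans hm)
      simp only [hcomp] at h3
      rw [show -n + n = (0:ℤ) by ring] at h3
      simpa [show -n + m = m - n by ring] using h3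
    have hex : ∃ m : ℤ, x = (p ^ m) (a (ρ x)) := ⟨n, hx⟩
    simp only [hfdef]
    rw [dif_neg hnot, dif_pos hex]
    exact hwd (a (ρ x)) _ n ((Classical.choose_spec hex).symm.trans hx) 1
  -- f is an involution
  have hff : ∀ x, f (f x) = x := by
    intro x
    rcases hρ x with ⟨n, hx⟩ | ⟨n, hx⟩
    · have h1 : f x = (p ^ (0 - n)) (ρ x) := hE1 x n hx
      have hρfx : ρ (f x) = ρ x := by rw [h1, hρp, hρρ]
      have h2 : f x = (p ^ (0 - n)) (ρ (f x)) := by rw [hρfx]; exact h1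
      have h3 := hE1 (f x) (0 - n) h2
      rw [h3, hρfx, show (0 - (0 - n) : ℤ) = n by ring, ← hx]
    · have h1 : f x = (p ^ (1 - n)) (a (ρ x)) := hE2 x n hx
      have hρfx : ρ (f x) = ρ x := by rw [h1, hρp, hρa, hρρ]
      have h2 : f x = (p ^ (1 - n)) (a (ρ (f x))) := by rw [hρfx]; exact h1
      have h3 := hE2 (f x) (1 - n) h2
      rw [h3, hρfx, show (1 - (1 - n) : ℤ) = n by ring, ← hx]
  -- f intertwines a and b
  have hfab : ∀ x, f (a x) = b (f x) := by
    intro x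
    rcases hρ x with ⟨n, hx⟩ | ⟨n, hx⟩
    · have hρax : ρ (a x) = ρ x := hρa x
      have hax : a x = (p ^ (0 - n)) (a (ρ (a x))) := by
        rw [hρax, zero_sub]
        conv_lhs => rw [hx]
        rw [hap]
      have h2 : f (a x) = (p ^ (1 - (0 - n))) (a (ρ (a x))) := hE2 _ _ hax
      have h1 : f x = (p ^ (0 - n)) (ρ x) := hE1 x n hx
      rw [h2, hρax, h1, hbp]
    · have hρax : ρ (a x) = ρ x := hρa x
      have hax : a x = (p ^ (0 - n)) (ρ (a x)) := by
        rw [hρax, zero_sub]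
        conv_lhs => rw [hx]
        rw [hap, haa]
      have h2 : f (a x) = (p ^ (0 - (0 - n))) (ρ (a x)) := hE1 _ _ hax
      have h1 : f x = (p ^ (1 - n)) (a (ρ x)) := hE2 x n hx
      rw [h2, hρax, h1, hbp, haa,
        show (0 - (0 - n) : ℤ) = n by ring, show (1 - (1 - n) : ℤ) = n by ring]
  refine ⟨⟨f, f, hff, hff⟩, ?_, ?_⟩
  · ext x
    exact hff x
  · have hr : (⟨f, f, hff, hff⟩ : Equiv.Perm α) * a = b * ⟨f, f, hff, hff⟩ :=
      Equiv.ext fun x => hfab x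
    rw [mul_inv_eq_iff_eq_mul]
    exact hr

end Aux

/-- Every double coset of `S_{2m}` with respect to `H` is self-inverse:
`Hg⁻¹H = HgH` for all `g`. -/
theorem doset_self_inverse (m : ℕ) (hm : 0 < m) (g : Equiv.Perm (Fin m × Fin 2)) :
    DoubleCoset.doubleCoset g⁻¹ (Hcent m : Set (Equiv.Perm (Fin m × Fin 2))) (Hcent m) =
      DoubleCoset.doubleCoset g (Hcent m : Set (Equiv.Perm (Fin m × Fin 2))) (Hcent m) := by
  classical
  set h₀ : Equiv.Perm (Fin m × Fin 2) := pairingPerm m with hh₀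
  have hinv : h₀ * h₀ = 1 := by
    apply Equiv.ext
    rintro ⟨k, j⟩
    show h₀ (h₀ (k, j)) = (k, j)
    simp [hh₀, pairingPerm, Equiv.swap_apply_self]
  have hfp : ∀ x, h₀ x ≠ x := by
    rintro ⟨k, j⟩ h
    have h2 := congrArg Prod.snd h
    simp only [hh₀, pairingPerm, Equiv.prodCongr_apply, Prod.map] at h2
    fin_cases j <;> simp_all
  set A : Equiv.Perm (Fin m × Fin 2) := g * h₀ * g⁻¹ with hA
  have hA2 : A * A = 1 := by
    have : A * A = g * (h₀ * h₀) * g⁻¹ := by rw [hA]; group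
    rw [this, hinv, mul_one, mul_inv_cancel]
  have hAf : ∀ x, A x ≠ x := by
    intro x h
    have h2 : g (h₀ (g⁻¹ x)) = x := h
    exact hfp (g⁻¹ x) (g.injective (h2.trans (g.apply_symm_apply x).symm))
  obtain ⟨r, hr2, hrc⟩ := exists_involution_conj A h₀ hA2 hinv hAf hfp
  have hrinv : r⁻¹ = r := inv_eq_of_mul_eq_one_right hr2
  have hrc' : r * A * r = h₀ := by rw [hrinv] at hrc; exact hrc
  set h : Equiv.Perm (Fin m × Fin 2) := r * g with hhdef
  have hH : h ∈ Hcent m := by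
    rw [Hcent, Subgroup.mem_centralizer_iff]
    intro y hy
    rw [Set.mem_singleton_iff] at hy
    subst hy
    show pairingPerm m * h = h * pairingPerm m
    rw [← hh₀, hhdef]
    calc h₀ * (r * g) = r * A * r * (r * g) := by rw [hrc']
      _ = r * A * (r * r) * g := by group
      _ = r * A * g := by rw [hr2, mul_one]
      _ = r * (g * h₀ * g⁻¹) * g := by rw [hA]
      _ = (r * g) * h₀ := by group
  have key : g⁻¹ = h⁻¹ * g * h⁻¹ := by
    rw [hhdef, mul_inv_rev, hrinv]
    have : g⁻¹ * r * g * (g⁻¹ * r) = g⁻¹ * (r * r) := by group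
    rw [this, hr2, mul_one]
  apply DoubleCoset.doubleCoset_eq_of_mem
  rw [DoubleCoset.mem_doubleCoset]
  exact ⟨h⁻¹, (Hcent m).inv_mem hH, h⁻¹, (Hcent m).inv_mem hH, key⟩
end

section
/- Let G be a finite group and K ≤ G a subgroup. Then the number of self-inverse double cosets of G with respect to K (double cosets KgK with Kg⁻¹K = KgK), multiplied by |G|, equals the number of pairs (C, x), where C ranges over the right cosets in K\G and x ranges over G, such that C·x² = C (i.e., the right coset C is fixed under right multiplication by x²). -/
open DoubleCoset

section Frame

variable {G : Type*} [Group G] [Finite G] (K : Subgroup G)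

omit [Finite G] in
private lemma doset_self_inv {y : G} (hy : y ^ 2 ∈ K) :
    doubleCoset y⁻¹ (K : Set G) K = doubleCoset y (K : Set G) K :=
  doubleCoset_eq_of_mem (mem_doubleCoset.mpr ⟨(y ^ 2)⁻¹, K.inv_mem hy, 1, K.one_mem, by group⟩)

private lemma card_T (y₀ : G) (hc : y₀ ^ 2 ∈ K) :
    Nat.card {y : G // y ^ 2 ∈ K ∧ DoubleCoset.mk K K y = DoubleCoset.mk K K y₀} = Nat.card K := by
  classical
  set T := {y : G // y ^ 2 ∈ K ∧ DoubleCoset.mk K K y = DoubleCoset.mk K K y₀} with hT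
  set P := {p : G × G // p.1 ∈ K ∧ p.2 ∈ K ∧ y₀ * p.2 * p.1 * y₀ ∈ K} with hP
  set S₁ := {v : G // v ∈ K ∧ y₀⁻¹ * v * y₀ ∈ K} with hS₁
  set S₂ := {u : G // u ∈ K ∧ y₀ * u * y₀ ∈ K} with hS₂
  have hvinv : ∀ v : S₁, y₀⁻¹ * (v : G)⁻¹ * y₀ ∈ K := by
    intro v
    have := K.inv_mem v.2.2
    rwa [show (y₀⁻¹ * (v : G) * y₀)⁻¹ = y₀⁻¹ * (v : G)⁻¹ * y₀ by group] at this
  -- the projection P → T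
  have projmem : ∀ p : P, (p.1.1 * y₀ * p.1.2) ^ 2 ∈ K ∧
      DoubleCoset.mk K K (p.1.1 * y₀ * p.1.2) = DoubleCoset.mk K K y₀ := by
    rintro ⟨⟨k₁, k₂⟩, h₁, h₂, h₃⟩
    constructor
    · have e : (k₁ * y₀ * k₂) ^ 2 = k₁ * (y₀ * k₂ * k₁ * y₀) * k₂ := by
        rw [pow_two]; group
      rw [e]; exact K.mul_mem (K.mul_mem h₁ h₃) h₂
    · exact (DoubleCoset.eq K K _ _).mpr ⟨k₁⁻¹, K.inv_mem h₁, k₂⁻¹, K.inv_mem h₂, by group⟩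
  let proj : P → T := fun p => ⟨p.1.1 * y₀ * p.1.2, projmem p⟩
  -- decompositions of elements of T
  have hdec : ∀ y : T, ∃ a₁ a₂ : G, a₁ ∈ K ∧ a₂ ∈ K ∧ (y : G) = a₁ * y₀ * a₂ := by
    rintro ⟨y, hy2, hymk⟩
    obtain ⟨h, hh, k, hk, he⟩ := (DoubleCoset.eq K K y y₀).mp hymk
    refine ⟨h⁻¹, k⁻¹, K.inv_mem hh, K.inv_mem hk, ?_⟩
    show y = h⁻¹ * y₀ * k⁻¹
    rw [he]; group
  choose a₁ a₂ ha₁ ha₂ hadec using hdec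
  -- each fiber of proj is equivalent to S₁
  have keyeq : ∀ y : T, ∀ p : {p : P // proj p = y},
      p.1.1.1 * y₀ * p.1.1.2 = a₁ y * y₀ * a₂ y := by
    rintro y ⟨⟨⟨k₁, k₂⟩, h₁, h₂, h₃⟩, hp⟩
    have := congrArg Subtype.val hp
    simp only [proj] at this
    rw [this, hadec y]
  have fiberEquiv : ∀ y : T, {p : P // proj p = y} ≃ S₁ := by
    intro y
    refine ⟨fun p => ⟨(a₁ y)⁻¹ * p.1.1.1, ?_, ?_⟩,
      fun v => ⟨⟨⟨a₁ y * v.1, y₀⁻¹ * v.1⁻¹ * y₀ * a₂ y⟩, ?_, ?_, ?_⟩, ?_⟩, ?_, ?_⟩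
    · exact K.mul_mem (K.inv_mem (ha₁ y)) p.1.2.1
    · -- y₀⁻¹ * ((a₁ y)⁻¹ * k₁) * y₀ ∈ K
      have key := keyeq y p
      have e : y₀⁻¹ * ((a₁ y)⁻¹ * p.1.1.1) * y₀ = a₂ y * p.1.1.2⁻¹ := by
        calc y₀⁻¹ * ((a₁ y)⁻¹ * p.1.1.1) * y₀
            = y₀⁻¹ * (a₁ y)⁻¹ * (p.1.1.1 * y₀ * p.1.1.2) * p.1.1.2⁻¹ := by group
          _ = y₀⁻¹ * (a₁ y)⁻¹ * (a₁ y * y₀ * a₂ y) * p.1.1.2⁻¹ := by rw [key]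
          _ = a₂ y * p.1.1.2⁻¹ := by group
      rw [e]; exact K.mul_mem (ha₂ y) (K.inv_mem p.1.2.2.1)
    · exact K.mul_mem (ha₁ y) v.2.1
    · exact K.mul_mem (hvinv v) (ha₂ y)
    · -- y₀ * k₂ * k₁ * y₀ ∈ K
      have hky : (a₁ y * v.1) * y₀ * (y₀⁻¹ * v.1⁻¹ * y₀ * a₂ y) = (y : G) := by
        rw [hadec y]; group
      have e : y₀ * (y₀⁻¹ * v.1⁻¹ * y₀ * a₂ y) * (a₁ y * v.1) * y₀
          = (a₁ y * v.1)⁻¹ * (((a₁ y * v.1) * y₀ * (y₀⁻¹ * v.1⁻¹ * y₀ * a₂ y)) *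
            ((a₁ y * v.1) * y₀ * (y₀⁻¹ * v.1⁻¹ * y₀ * a₂ y))) * (y₀⁻¹ * v.1⁻¹ * y₀ * a₂ y)⁻¹ := by
        group
      rw [e, hky, ← pow_two]
      exact K.mul_mem (K.mul_mem (K.inv_mem (K.mul_mem (ha₁ y) v.2.1)) y.2.1)
        (K.inv_mem (K.mul_mem (hvinv v) (ha₂ y)))
    · -- proj = y
      apply Subtype.ext
      show (a₁ y * v.1) * y₀ * (y₀⁻¹ * v.1⁻¹ * y₀ * a₂ y) = (y : G)
      rw [hadec y]; group
    · -- left inverse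
      rintro p
      have key := keyeq y p
      apply Subtype.ext
      apply Subtype.ext
      apply Prod.ext
      · show a₁ y * ((a₁ y)⁻¹ * p.1.1.1) = p.1.1.1
        group
      · show y₀⁻¹ * ((a₁ y)⁻¹ * p.1.1.1)⁻¹ * y₀ * a₂ y = p.1.1.2
        calc y₀⁻¹ * ((a₁ y)⁻¹ * p.1.1.1)⁻¹ * y₀ * a₂ y
            = y₀⁻¹ * p.1.1.1⁻¹ * (a₁ y * y₀ * a₂ y) := by group
          _ = y₀⁻¹ * p.1.1.1⁻¹ * (p.1.1.1 * y₀ * p.1.1.2) := by rw [key]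
          _ = p.1.1.2 := by group
    · -- right inverse
      intro v
      apply Subtype.ext
      show (a₁ y)⁻¹ * (a₁ y * v.1) = v.1
      group
  -- P ≃ K × S₂
  have e₂ : P ≃ K × S₂ := by
    refine ⟨fun p => (⟨p.1.1, p.2.1⟩, ⟨p.1.2 * p.1.1, K.mul_mem p.2.2.1 p.2.1, ?_⟩),
      fun q => ⟨⟨q.1.1, q.2.1 * q.1.1⁻¹⟩, q.1.2, K.mul_mem q.2.2.1 (K.inv_mem q.1.2), ?_⟩,
      ?_, ?_⟩
    · have e : y₀ * (p.1.2 * p.1.1) * y₀ = y₀ * p.1.2 * p.1.1 * y₀ := by group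
      rw [e]; exact p.2.2.2
    · have e : y₀ * (q.2.1 * q.1.1⁻¹) * q.1.1 * y₀ = y₀ * q.2.1 * y₀ := by group
      rw [e]; exact q.2.2.2
    · rintro ⟨⟨k₁, k₂⟩, h₁, h₂, h₃⟩
      apply Subtype.ext; apply Prod.ext
      · rfl
      · show k₂ * k₁ * k₁⁻¹ = k₂; group
    · rintro ⟨k, u⟩
      refine Prod.ext (Subtype.ext rfl) (Subtype.ext ?_)
      show u.1 * k.1⁻¹ * k.1 = u.1; group
  -- S₂ ≃ S₁
  have e₃ : S₂ ≃ S₁ := by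
    refine ⟨fun u => ⟨y₀ * u.1 * y₀⁻¹, ?_, ?_⟩, fun v => ⟨y₀⁻¹ * v.1 * y₀, v.2.2, ?_⟩, ?_, ?_⟩
    · have e : y₀ * u.1 * y₀⁻¹ = (y₀ * u.1 * y₀) * (y₀ ^ 2)⁻¹ := by group
      rw [e]; exact K.mul_mem u.2.2 (K.inv_mem hc)
    · have e : y₀⁻¹ * (y₀ * u.1 * y₀⁻¹) * y₀ = u.1 := by group
      rw [e]; exact u.2.1
    · have e : y₀ * (y₀⁻¹ * v.1 * y₀) * y₀ = v.1 * y₀ ^ 2 := by rw [pow_two]; group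
      rw [e]; exact K.mul_mem v.2.1 hc
    · intro u; apply Subtype.ext
      show y₀⁻¹ * (y₀ * u.1 * y₀⁻¹) * y₀ = u.1; group
    · intro v; apply Subtype.ext
      show y₀ * (y₀⁻¹ * v.1 * y₀) * y₀⁻¹ = v.1; group
  -- counting
  have hc1 : Nat.card P = Nat.card T * Nat.card S₁ := by
    calc Nat.card P = Nat.card (Σ y : T, {p : P // proj p = y}) :=
          Nat.card_congr (Equiv.sigmaFiberEquiv proj).symm
      _ = Nat.card (T × S₁) :=
          Nat.card_congr ((Equiv.sigmaCongrRight fiberEquiv).trans (Equiv.sigmaEquivProd T S₁))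
      _ = Nat.card T * Nat.card S₁ := Nat.card_prod T S₁
  have hc2 : Nat.card P = Nat.card ↥K * Nat.card S₁ := by
    calc Nat.card P = Nat.card (K × S₂) := Nat.card_congr e₂
      _ = Nat.card ↥K * Nat.card S₂ := Nat.card_prod _ _
      _ = Nat.card ↥K * Nat.card S₁ := by rw [Nat.card_congr e₃]
  haveI : Nonempty S₁ := ⟨⟨1, K.one_mem, by simpa using K.one_mem⟩⟩
  have hpos : 0 < Nat.card S₁ := Nat.card_pos
  exact Nat.eq_of_mul_eq_mul_right hpos (hc1.symm.trans hc2)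


private lemma card_sqrt :
    Nat.card {y : G // y ^ 2 ∈ K} =
      Nat.card {D : DoubleCoset.Quotient (K : Set G) (K : Set G) //
        DoubleCoset.doubleCoset (Quotient.out D)⁻¹ (K : Set G) (K : Set G) =
          DoubleCoset.doubleCoset (Quotient.out D) (K : Set G) (K : Set G)} * Nat.card ↥K := by
  classical
  set SI := {D : DoubleCoset.Quotient (K : Set G) (K : Set G) //
        DoubleCoset.doubleCoset (Quotient.out D)⁻¹ (K : Set G) (K : Set G) =
          DoubleCoset.doubleCoset (Quotient.out D) (K : Set G) (K : Set G)} with hSI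
  have fmem : ∀ y : {y : G // y ^ 2 ∈ K},
      DoubleCoset.doubleCoset (Quotient.out (DoubleCoset.mk K K y.1))⁻¹ (K : Set G) (K : Set G) =
        DoubleCoset.doubleCoset (Quotient.out (DoubleCoset.mk K K y.1)) (K : Set G) (K : Set G) := by
    rintro ⟨y, hy⟩
    have ha : DoubleCoset.mk K K (Quotient.out (DoubleCoset.mk K K y)) = DoubleCoset.mk K K y :=
      DoubleCoset.out_eq' K K _
    obtain ⟨h, hh, k, hk, he⟩ := (DoubleCoset.eq K K _ _).mp ha
    set a := Quotient.out (DoubleCoset.mk K K y) with hadef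
    -- he : y = h * a * k
    have h1 : doubleCoset a (K : Set G) K = doubleCoset y (K : Set G) K := by
      refine doubleCoset_eq_of_mem (mem_doubleCoset.mpr ⟨h⁻¹, K.inv_mem hh, k⁻¹, K.inv_mem hk, ?_⟩)
      rw [he]; group
    have h2 : doubleCoset a⁻¹ (K : Set G) K = doubleCoset y⁻¹ (K : Set G) K := by
      refine doubleCoset_eq_of_mem (mem_doubleCoset.mpr ⟨k, hk, h, hh, ?_⟩)
      rw [he]; group
    rw [h2, doset_self_inv K hy, h1]
  let f : {y : G // y ^ 2 ∈ K} → SI := fun y => ⟨DoubleCoset.mk K K y.1, fmem y⟩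
  have fibcard : ∀ D : SI, Nat.card {y : {y : G // y ^ 2 ∈ K} // f y = D} = Nat.card ↥K := by
    intro D
    set a := Quotient.out D.1 with hadef
    have hmem : a⁻¹ ∈ doubleCoset a (K : Set G) K := by
      rw [← D.2]; exact mem_doubleCoset_self K K a⁻¹
    obtain ⟨h, hh, k, hk, he⟩ := mem_doubleCoset.mp hmem
    -- he : a⁻¹ = h * a * k
    have h3 : a * h * a * k = 1 := by
      have : a * (h * a * k) = a * a⁻¹ := by rw [← he]
      rw [mul_inv_cancel] at this
      rw [← this]; group
    have hc : (a * h) ^ 2 ∈ K := by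
      have e : (a * h) ^ 2 = (a * h * a * k) * (k⁻¹ * h) := by rw [pow_two]; group
      rw [e, h3, one_mul]
      exact K.mul_mem (K.inv_mem hk) hh
    have hmk : DoubleCoset.mk K K (a * h) = D.1 := by
      have : DoubleCoset.mk K K a = DoubleCoset.mk K K (a * h) :=
        (DoubleCoset.eq K K _ _).mpr ⟨1, K.one_mem, h, hh, by group⟩
      rw [← this, hadef, DoubleCoset.out_eq']
    have e : {y : {y : G // y ^ 2 ∈ K} // f y = D} ≃
        {y : G // y ^ 2 ∈ K ∧ DoubleCoset.mk K K y = DoubleCoset.mk K K (a * h)} := by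
      refine ⟨fun q => ⟨q.1.1, q.1.2, ?_⟩, fun y => ⟨⟨y.1, y.2.1⟩, ?_⟩, ?_, ?_⟩
      · have := congrArg Subtype.val q.2
        simp only [f] at this
        rw [this, hmk]
      · apply Subtype.ext
        show DoubleCoset.mk K K y.1 = D.1
        rw [y.2.2, hmk]
      · intro q; apply Subtype.ext; apply Subtype.ext; rfl
      · intro y; apply Subtype.ext; rfl
    rw [Nat.card_congr e]
    exact card_T K (a * h) hc
  have key : ∀ D : SI, {y : {y : G // y ^ 2 ∈ K} // f y = D} ≃ ↥K := fun D =>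
    Classical.choice (Finite.card_eq.mp (fibcard D))
  calc Nat.card {y : G // y ^ 2 ∈ K}
      = Nat.card (Σ D : SI, {y : {y : G // y ^ 2 ∈ K} // f y = D}) :=
        Nat.card_congr (Equiv.sigmaFiberEquiv f).symm
    _ = Nat.card (SI × ↥K) :=
        Nat.card_congr ((Equiv.sigmaCongrRight key).trans (Equiv.sigmaEquivProd SI ↥K))
    _ = Nat.card SI * Nat.card ↥K := Nat.card_prod _ _

omit [Finite G] in
private lemma cond_iff (C : Quotient (QuotientGroup.rightRel K)) (x : G) :
    Quotient.mk (QuotientGroup.rightRel K) (Quotient.out C * x ^ 2) = C ↔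
      Quotient.out C * x ^ 2 * (Quotient.out C)⁻¹ ∈ K := by
  constructor
  · intro h
    have h2 : Quotient.mk (QuotientGroup.rightRel K) (Quotient.out C * x ^ 2) =
        Quotient.mk (QuotientGroup.rightRel K) (Quotient.out C) :=
      h.trans (Quotient.out_eq C).symm
    have h3 := QuotientGroup.rightRel_apply.mp (Quotient.exact h2)
    have h4 := K.inv_mem h3
    rwa [show (Quotient.out C * (Quotient.out C * x ^ 2)⁻¹)⁻¹ =
      Quotient.out C * x ^ 2 * (Quotient.out C)⁻¹ by group] at h4
  · intro h
    have h3 : Quotient.out C * (Quotient.out C * x ^ 2)⁻¹ ∈ K := by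
      have := K.inv_mem h
      rwa [show (Quotient.out C * x ^ 2 * (Quotient.out C)⁻¹)⁻¹ =
        Quotient.out C * (Quotient.out C * x ^ 2)⁻¹ by group] at this
    exact (Quotient.sound (QuotientGroup.rightRel_apply.mpr h3)).trans (Quotient.out_eq C)

omit [Finite G] in
private lemma card_pairs :
    Nat.card {p : Quotient (QuotientGroup.rightRel K) × G //
        Quotient.mk (QuotientGroup.rightRel K) (Quotient.out p.1 * p.2 ^ 2) = p.1} =
      Nat.card (Quotient (QuotientGroup.rightRel K)) * Nat.card {y : G // y ^ 2 ∈ K} := by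
  classical
  have e : {p : Quotient (QuotientGroup.rightRel K) × G //
        Quotient.mk (QuotientGroup.rightRel K) (Quotient.out p.1 * p.2 ^ 2) = p.1} ≃
      Quotient (QuotientGroup.rightRel K) × {y : G // y ^ 2 ∈ K} := by
    refine ⟨fun p => (p.1.1, ⟨Quotient.out p.1.1 * p.1.2 * (Quotient.out p.1.1)⁻¹, ?_⟩),
      fun q => ⟨(q.1, (Quotient.out q.1)⁻¹ * q.2.1 * Quotient.out q.1), ?_⟩, ?_, ?_⟩
    · rw [show (Quotient.out p.1.1 * p.1.2 * (Quotient.out p.1.1)⁻¹) ^ 2 =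
        Quotient.out p.1.1 * p.1.2 ^ 2 * (Quotient.out p.1.1)⁻¹ by rw [pow_two, pow_two]; group]
      exact (cond_iff K p.1.1 p.1.2).mp p.2
    · refine (cond_iff K q.1 _).mpr ?_
      rw [show Quotient.out q.1 * ((Quotient.out q.1)⁻¹ * q.2.1 * Quotient.out q.1) ^ 2 *
        (Quotient.out q.1)⁻¹ = q.2.1 ^ 2 by rw [pow_two, pow_two]; group]
      exact q.2.2
    · rintro ⟨⟨C, x⟩, hp⟩
      apply Subtype.ext; apply Prod.ext
      · rfl
      · show (Quotient.out C)⁻¹ * (Quotient.out C * x * (Quotient.out C)⁻¹) * Quotient.out C = x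
        group
    · rintro ⟨C, y⟩
      refine Prod.ext rfl (Subtype.ext ?_)
      show Quotient.out C * ((Quotient.out C)⁻¹ * y.1 * Quotient.out C) * (Quotient.out C)⁻¹ = y.1
      group
  rw [Nat.card_congr e, Nat.card_prod]

omit [Finite G] in
private lemma card_G_eq :
    Nat.card G = Nat.card (Quotient (QuotientGroup.rightRel K)) * Nat.card ↥K := by
  calc Nat.card G = Nat.card ((G ⧸ K) × ↥K) :=
        Nat.card_congr (Subgroup.groupEquivQuotientProdSubgroup)
    _ = Nat.card (G ⧸ K) * Nat.card ↥K := Nat.card_prod _ _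
    _ = Nat.card (Quotient (QuotientGroup.rightRel K)) * Nat.card ↥K := by
        rw [Nat.card_congr (QuotientGroup.quotientRightRelEquivQuotientLeftRel K).symm]

end Frame

/-- Frame's counting lemma: for a finite group `G` and a subgroup `K`, the number of
self-inverse double cosets `KgK` (those with `Kg⁻¹K = KgK`), multiplied by `|G|`,
equals the number of pairs `(C, x)` with `C` a right coset in `K\G` and `x ∈ G`
such that `C·x² = C`. -/
theorem frame_self_inverse_doset_count (G : Type*) [Group G] [Finite G]
    (K : Subgroup G) :
    Nat.card {D : DoubleCoset.Quotient (K : Set G) (K : Set G) //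
        DoubleCoset.doubleCoset (Quotient.out D)⁻¹ (K : Set G) (K : Set G) =
          DoubleCoset.doubleCoset (Quotient.out D) (K : Set G) (K : Set G)} *
      Nat.card G =
    Nat.card {p : Quotient (QuotientGroup.rightRel K) × G //
        Quotient.mk (QuotientGroup.rightRel K) (Quotient.out p.1 * p.2 ^ 2) = p.1} := by
  rw [card_pairs K, card_sqrt K, card_G_eq K]
  ring
end

section
/- Let m be a positive integer and let λ be a partition of m with r_i parts equal to i for i = 1,...,m. Then 2^{2m}·(m!)² / ((2m)! · ∏_{i=1}^{m} (2i)^{r_i}·r_i!) = (m! / ∏_{j=1}^{m} (j − 1/2)) · ∏_{i=1}^{m} ((1/2)/i)^{r_i} / r_i!. In other words, the probability density λ ↦ 2^{2m}(m!)²/((2m)! f(λ)) on partitions of m coincides with the Ewens sampling distribution ESF(1/2) with bias θ = 1/2. -/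
lemma prod_half_aux (m : ℕ) :
    ∏ j ∈ Finset.Icc 1 m, ((j : ℚ) - 1 / 2) =
      (Nat.factorial (2 * m) : ℚ) / (4 ^ m * Nat.factorial m) := by
  induction m with
  | zero => simp
  | succ n ih =>
    rw [Finset.prod_Icc_succ_top (by omega), ih]
    have h2 : 2 * (n + 1) = 2 * n + 1 + 1 := by ring
    rw [h2]
    have h3 : (Nat.factorial (2 * n) : ℚ) ≠ 0 := by positivity
    have h4 : (Nat.factorial n : ℚ) ≠ 0 := by positivity
    simp only [Nat.factorial_succ]
    push_cast
    field_simp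
    ring

/-- For a partition `λ` of `m` with `r i = λ.parts.count i` parts equal to `i`,
the probability `2^{2m}(m!)² / ((2m)! · ∏_{i=1}^m (2i)^{r_i} r_i!)` coincides with the
Ewens sampling density with bias `θ = 1/2`:
`(m! / ∏_{j=1}^m (j − 1/2)) · ∏_{i=1}^m ((1/2)/i)^{r_i} / r_i!`. -/
theorem prob_eq_ewens_half (m : ℕ) (hm : 0 < m) (lam : Nat.Partition m) :
    (2 : ℚ) ^ (2 * m) * (Nat.factorial m : ℚ) ^ 2 /
        ((Nat.factorial (2 * m) : ℚ) *
          ∏ i ∈ Finset.Icc 1 m,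
            (2 * i : ℚ) ^ (lam.parts.count i) * (Nat.factorial (lam.parts.count i) : ℚ)) =
      ((Nat.factorial m : ℚ) / ∏ j ∈ Finset.Icc 1 m, ((j : ℚ) - 1 / 2)) *
        ∏ i ∈ Finset.Icc 1 m,
          ((1 / 2 : ℚ) / (i : ℚ)) ^ (lam.parts.count i) /
            (Nat.factorial (lam.parts.count i) : ℚ) := by
  have hrw : ∏ i ∈ Finset.Icc 1 m,
      ((1 / 2 : ℚ) / (i : ℚ)) ^ (lam.parts.count i) /
        (Nat.factorial (lam.parts.count i) : ℚ) =
      (∏ i ∈ Finset.Icc 1 m,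
        (2 * i : ℚ) ^ (lam.parts.count i) * (Nat.factorial (lam.parts.count i) : ℚ))⁻¹ := by
    rw [← Finset.prod_inv_distrib]
    apply Finset.prod_congr rfl
    intro i hi
    have hi1 : (1 : ℕ) ≤ i := (Finset.mem_Icc.mp hi).1
    have hiq : (i : ℚ) ≠ 0 := by positivity
    have h : ((1 / 2 : ℚ) / (i : ℚ)) = ((2 * i : ℚ))⁻¹ := by field_simp
    rw [h, inv_pow, mul_inv, div_eq_mul_inv]
  rw [hrw, prod_half_aux]
  have hP : (∏ i ∈ Finset.Icc 1 m,
      (2 * i : ℚ) ^ (lam.parts.count i) * (Nat.factorial (lam.parts.count i) : ℚ)) ≠ 0 := by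
    apply Finset.prod_ne_zero_iff.mpr
    intro i hi
    have hi1 : (1 : ℕ) ≤ i := (Finset.mem_Icc.mp hi).1
    have : (0:ℚ) < i := by positivity
    positivity
  have h1 : (Nat.factorial (2 * m) : ℚ) ≠ 0 := by positivity
  have h2 : (Nat.factorial m : ℚ) ≠ 0 := by positivity
  have hpow : (2 : ℚ) ^ (2 * m) = 4 ^ m := by
    rw [pow_mul]; norm_num
  rw [hpow]
  field_simp
end

section
/- For each positive integer m define a probability measure on the set of partitions of m by P(λ) = 2^{2m}(m!)² / ((2m)!·f(λ)), where f(λ) = ∏_{i=1}^{m}(2i)^{r_i}·r_i! and r_i is the number of parts of λ equal to i. Then there exists a constant C > 0 such that the probability P({λ partition of m : f(λ) > C·m^{log m}}) tends to 0 as m → ∞ (here m^{log m} = exp((log m)²)). -/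
open Filter

/-- For a partition `λ` of `m` with `r i = λ.parts.count i` parts equal to `i`,
`f(λ) = ∏_{i=1}^{m} (2i)^{r_i} · r_i!`. -/
def fwt (m : ℕ) (lam : Nat.Partition m) : ℕ :=
  ∏ i ∈ Finset.Icc 1 m, (2 * i) ^ (lam.parts.count i) * Nat.factorial (lam.parts.count i)

/-- The probability density `P(λ) = 2^{2m}(m!)² / ((2m)!·f(λ))` on partitions of `m`. -/
noncomputable def Pdens (m : ℕ) (lam : Nat.Partition m) : ℝ :=
  2 ^ (2 * m) * (Nat.factorial m : ℝ) ^ 2 /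
    ((Nat.factorial (2 * m) : ℝ) * (fwt m lam : ℝ))

def zms (N : ℕ) (s : Multiset ℕ) : ℕ :=
  ∏ i ∈ Finset.Icc 1 N, i ^ (s.count i) * Nat.factorial (s.count i)

def Lparts (m : ℕ) (lam : Nat.Partition m) : ℕ := ∑ i ∈ Finset.Icc 1 m, lam.parts.count i

noncomputable def Spart (m : ℕ) : ℝ :=
  ∑ lam : Nat.Partition m, ((zms m lam.parts : ℝ))⁻¹


lemma zms_pos (N : ℕ) (s : Multiset ℕ) : 0 < zms N s := by
  apply Finset.prod_pos
  intro i hi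
  have h1 : 1 ≤ i := (Finset.mem_Icc.mp hi).1
  exact Nat.mul_pos (Nat.pow_pos h1) (Nat.factorial_pos _)

lemma zms_eq_of_le {n N : ℕ} (hnN : n ≤ N) {s : Multiset ℕ} (hs : ∀ x ∈ s, x ≤ n) :
    zms N s = zms n s := by
  unfold zms
  refine (Finset.prod_subset (Finset.Icc_subset_Icc_right hnN) ?_).symm
  intro i hi hni
  have hcount : s.count i = 0 := by
    rw [Multiset.count_eq_zero]
    intro hmem
    exact hni (Finset.mem_Icc.mpr ⟨(Finset.mem_Icc.mp hi).1, hs i hmem⟩)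
  simp [hcount]

lemma zms_cons {N j : ℕ} (hj1 : 1 ≤ j) (hjN : j ≤ N) (s : Multiset ℕ) :
    zms N (j ::ₘ s) = j * (s.count j + 1) * zms N s := by
  unfold zms
  have hjmem : j ∈ Finset.Icc 1 N := Finset.mem_Icc.mpr ⟨hj1, hjN⟩
  rw [← Finset.mul_prod_erase _ _ hjmem, ← Finset.mul_prod_erase _ (fun i => i ^ (s.count i) * Nat.factorial (s.count i)) hjmem]
  have hc : (j ::ₘ s).count j = s.count j + 1 := by simp
  have hrest : ∀ i ∈ (Finset.Icc 1 N).erase j,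
      i ^ ((j ::ₘ s).count i) * Nat.factorial ((j ::ₘ s).count i)
        = i ^ (s.count i) * Nat.factorial (s.count i) := by
    intro i hi
    rw [Multiset.count_cons_of_ne (Finset.ne_of_mem_erase hi)]
  rw [Finset.prod_congr rfl hrest, hc, pow_succ, Nat.factorial_succ]
  ring

lemma count_mul_le (s : Multiset ℕ) (i : ℕ) : s.count i * i ≤ s.sum := by
  have h : s.filter (· = i) ≤ s := Multiset.filter_le _ s
  have h2 : (s.filter (· = i)).sum = s.count i * i := by
    rw [Multiset.filter_eq', Multiset.sum_replicate, smul_eq_mul]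
  calc s.count i * i = (s.filter (· = i)).sum := h2.symm
    _ ≤ s.sum := by
        conv_rhs => rw [← Multiset.filter_add_not (· = i) s]
        rw [Multiset.sum_add]
        exact Nat.le_add_right _ _

lemma sum_count_eq {m : ℕ} (s : Multiset ℕ) (h : ∀ x ∈ s, x ∈ Finset.Icc 1 m) :
    ∑ j ∈ Finset.Icc 1 m, j * s.count j = s.sum := by
  induction s using Multiset.induction with
  | empty => simp
  | cons a t ih =>
      have ha : a ∈ Finset.Icc 1 m := h a (Multiset.mem_cons_self a t)
      have ht : ∀ x ∈ t, x ∈ Finset.Icc 1 m := fun x hx => h x (Multiset.mem_cons_of_mem hx)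
      rw [Multiset.sum_cons, ← ih ht]
      have : ∀ j ∈ Finset.Icc 1 m, j * (a ::ₘ t).count j
          = j * t.count j + (if j = a then j else 0) := by
        intro j hj
        rw [Multiset.count_cons]
        split <;> ring_nf <;> omega
      rw [Finset.sum_congr rfl this, Finset.sum_add_distrib, Finset.sum_ite_eq' _ a (fun j => j)]
      simp [ha]
      ring

lemma wallis : ∀ m : ℕ, 1 ≤ m → (4 : ℝ) ^ m ≤ 2 * Real.sqrt m * (Nat.centralBinom m : ℝ) := by
  intro m
  induction m with
  | zero => omega
  | succ n ih =>
      intro _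
      rcases Nat.eq_zero_or_pos n with hn | hn
      · subst hn
        norm_num [Nat.centralBinom]
      · have IH := ih hn
        have hkey : ((n : ℝ) + 1) * (Nat.centralBinom (n + 1) : ℝ)
            = 2 * (2 * n + 1) * (Nat.centralBinom n : ℝ) := by
          have := Nat.succ_mul_centralBinom_succ n
          exact_mod_cast congrArg (Nat.cast : ℕ → ℝ) this
        have hCB : (0 : ℝ) < (Nat.centralBinom n : ℝ) := by
          exact_mod_cast Nat.centralBinom_pos n
        have hn1 : (0 : ℝ) < (n : ℝ) + 1 := by positivity
        -- key sqrt inequality: 2*(n+1)*√n ≤ (2n+1)*√(n+1)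
        have hs : 2 * ((n : ℝ) + 1) * Real.sqrt n ≤ (2 * n + 1) * Real.sqrt ((n : ℝ) + 1) := by
          have h1 : Real.sqrt n * Real.sqrt n = (n : ℝ) := Real.mul_self_sqrt (by positivity)
          have h2 : Real.sqrt ((n:ℝ)+1) * Real.sqrt ((n:ℝ)+1) = (n : ℝ) + 1 :=
            Real.mul_self_sqrt (by positivity)
          have h3 : Real.sqrt n ≥ 0 := Real.sqrt_nonneg _
          have h4 : Real.sqrt ((n:ℝ)+1) ≥ 0 := Real.sqrt_nonneg _
          have h5 : Real.sqrt n ≤ Real.sqrt ((n:ℝ)+1) := Real.sqrt_le_sqrt (by linarith)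
          nlinarith [sq_nonneg (2*((n:ℝ)+1)*Real.sqrt n - (2*n+1)*Real.sqrt ((n:ℝ)+1)),
            sq_nonneg (Real.sqrt n + Real.sqrt ((n:ℝ)+1)), sq_nonneg (Real.sqrt n - Real.sqrt ((n:ℝ)+1))]
        -- multiply through
        have goal' : ((n:ℝ)+1) * (4 : ℝ) ^ (n+1) ≤ ((n:ℝ)+1) * (2 * Real.sqrt (n+1) * (Nat.centralBinom (n+1) : ℝ)) := by
          have lhs : ((n:ℝ)+1) * (4:ℝ)^(n+1) = 4 * ((n:ℝ)+1) * 4^n := by ring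
          have rhs : ((n:ℝ)+1) * (2 * Real.sqrt (n+1) * (Nat.centralBinom (n+1) : ℝ))
              = 2 * Real.sqrt (n+1) * (((n:ℝ)+1) * (Nat.centralBinom (n+1) : ℝ)) := by ring
          rw [lhs, rhs, hkey]
          calc 4 * ((n:ℝ)+1) * 4^n ≤ 4 * ((n:ℝ)+1) * (2 * Real.sqrt n * (Nat.centralBinom n : ℝ)) := by
                have : (0:ℝ) ≤ 4 * ((n:ℝ)+1) := by positivity
                exact mul_le_mul_of_nonneg_left IH this
            _ ≤ 2 * Real.sqrt (n+1) * (2 * (2 * n + 1) * (Nat.centralBinom n : ℝ)) := by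
                have expand : 4 * ((n:ℝ)+1) * (2 * Real.sqrt n * (Nat.centralBinom n : ℝ))
                    = (2 * ((n:ℝ)+1) * Real.sqrt n) * (4 * (Nat.centralBinom n : ℝ)) := by ring
                have expand2 : 2 * Real.sqrt ((n:ℝ)+1) * (2 * (2 * (n:ℝ) + 1) * (Nat.centralBinom n : ℝ))
                    = ((2 * (n:ℝ) + 1) * Real.sqrt ((n:ℝ)+1)) * (4 * (Nat.centralBinom n : ℝ)) := by ring
                rw [expand]
                push_cast
                rw [expand2]
                exact mul_le_mul_of_nonneg_right hs (by positivity)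
        have := le_of_mul_le_mul_left (by
          calc ((n:ℝ)+1) * (4 : ℝ) ^ (n+1) ≤ _ := goal'
          ) hn1
        exact_mod_cast this




lemma parts_mem_Icc {m : ℕ} (lam : Nat.Partition m) : ∀ x ∈ lam.parts, x ∈ Finset.Icc 1 m := by
  intro x hx
  refine Finset.mem_Icc.mpr ⟨lam.parts_pos hx, ?_⟩
  calc x ≤ lam.parts.sum := Multiset.le_sum_of_mem hx
    _ = m := lam.parts_sum

/-- Inserting a part `j` into a partition of `m - j`. -/
def insPart {m j : ℕ} (hj1 : 1 ≤ j) (hjm : j ≤ m) (mu : Nat.Partition (m - j)) :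
    Nat.Partition m where
  parts := j ::ₘ mu.parts
  parts_pos := by
    intro i hi
    rcases Multiset.mem_cons.mp hi with h | h
    · omega
    · exact mu.parts_pos h
  parts_sum := by rw [Multiset.sum_cons, mu.parts_sum]; omega

lemma sum_remove {m j : ℕ} (hj : j ∈ Finset.Icc 1 m) :
    ∑ lam : Nat.Partition m, (j * lam.parts.count j : ℝ) * ((zms m lam.parts : ℝ))⁻¹
      = Spart (m - j) := by
  obtain ⟨hj1, hjm⟩ := Finset.mem_Icc.mp hj
  set F : Nat.Partition m → ℝ :=
    fun lam => (j * lam.parts.count j : ℝ) * ((zms m lam.parts : ℝ))⁻¹ with hF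
  have hinj : Function.Injective (insPart hj1 hjm) := by
    intro a b hab
    have : j ::ₘ a.parts = j ::ₘ b.parts := congrArg Nat.Partition.parts hab
    exact Nat.Partition.ext (by exact (Multiset.cons_inj_right j).mp this)
  have himg : ∀ lam : Nat.Partition m,
      lam ∉ Finset.image (insPart hj1 hjm) Finset.univ → F lam = 0 := by
    intro lam h
    rcases Nat.eq_zero_or_pos (lam.parts.count j) with hc | hc
    · simp [hF, hc]
    · exfalso
      have hjmem : j ∈ lam.parts := Multiset.count_pos.mp hc
      have hsum : (lam.parts.erase j).sum = m - j := by
        have := lam.parts_sum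
        have h2 : j + (lam.parts.erase j).sum = lam.parts.sum := by
          rw [← Multiset.sum_cons, Multiset.cons_erase hjmem]
        omega
      set mu : Nat.Partition (m - j) :=
        ⟨lam.parts.erase j, fun hi => lam.parts_pos (Multiset.mem_of_mem_erase hi), hsum⟩
      apply h
      refine Finset.mem_image.mpr ⟨mu, Finset.mem_univ _, ?_⟩
      apply Nat.Partition.ext
      show j ::ₘ lam.parts.erase j = lam.parts
      exact Multiset.cons_erase hjmem
  calc ∑ lam : Nat.Partition m, F lam
      = ∑ lam ∈ Finset.image (insPart hj1 hjm) Finset.univ, F lam :=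
        (Finset.sum_subset (Finset.subset_univ _) (fun x _ hx => himg x hx)).symm
    _ = ∑ mu : Nat.Partition (m - j), F (insPart hj1 hjm mu) :=
        Finset.sum_image (fun a _ b _ h => hinj h)
    _ = Spart (m - j) := by
        unfold Spart
        apply Finset.sum_congr rfl
        intro mu _
        have hparts : (insPart hj1 hjm mu).parts = j ::ₘ mu.parts := rfl
        have hcount : (j ::ₘ mu.parts).count j = mu.parts.count j + 1 := by simp
        have hz : zms m (j ::ₘ mu.parts) = j * (mu.parts.count j + 1) * zms m mu.parts :=
          zms_cons hj1 hjm mu.parts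
        have hzz : zms m mu.parts = zms (m - j) mu.parts := by
          apply zms_eq_of_le (Nat.sub_le m j)
          intro x hx
          exact (Finset.mem_Icc.mp (parts_mem_Icc mu x hx)).2
        rw [hF]
        simp only [hparts, hcount, hz, hzz]
        have hjj : ((j : ℝ) * (mu.parts.count j + 1)) ≠ 0 := by
          have : 1 ≤ j := hj1
          positivity
        have hzne : ((zms (m - j) mu.parts : ℝ)) ≠ 0 := by
          have := zms_pos (m - j) mu.parts
          positivity
        push_cast
        field_simp

lemma Spart_rec {m : ℕ} (hm : 1 ≤ m) :
    (m : ℝ) * Spart m = ∑ j ∈ Finset.Icc 1 m, Spart (m - j) := by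
  have : (m : ℝ) * Spart m
      = ∑ lam : Nat.Partition m, (m : ℝ) * ((zms m lam.parts : ℝ))⁻¹ := by
    rw [Spart, Finset.mul_sum]
  rw [this]
  have hterm : ∀ lam : Nat.Partition m,
      (m : ℝ) * ((zms m lam.parts : ℝ))⁻¹
        = ∑ j ∈ Finset.Icc 1 m, (j * lam.parts.count j : ℝ) * ((zms m lam.parts : ℝ))⁻¹ := by
    intro lam
    rw [← Finset.sum_mul]
    congr 1
    have hnat : ∑ j ∈ Finset.Icc 1 m, j * lam.parts.count j = m :=
      (sum_count_eq lam.parts (parts_mem_Icc lam)).trans lam.parts_sum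
    calc (m : ℝ) = ((∑ j ∈ Finset.Icc 1 m, j * lam.parts.count j : ℕ) : ℝ) := by
          exact_mod_cast (congrArg (Nat.cast : ℕ → ℝ) hnat).symm
      _ = ∑ j ∈ Finset.Icc 1 m, (j * lam.parts.count j : ℝ) := by push_cast; rfl
  rw [Finset.sum_congr rfl (fun lam _ => hterm lam), Finset.sum_comm]
  exact Finset.sum_congr rfl (fun j hj => sum_remove hj)

lemma Spart_le_one : ∀ m : ℕ, Spart m ≤ 1 := by
  intro m
  induction m using Nat.strong_induction_on with
  | _ m ih =>
      rcases Nat.eq_zero_or_pos m with hm | hm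
      · subst hm
        rw [Spart]
        rw [Finset.sum_eq_single_of_mem default (Finset.mem_univ _) (fun b _ hb => absurd (Subsingleton.elim b default) hb)]
        have : (default : Nat.Partition 0).parts = 0 := by
          have h := (default : Nat.Partition 0).parts_sum
          by_contra h0
          obtain ⟨x, hx⟩ := Multiset.exists_mem_of_ne_zero h0
          have hx1 := (default : Nat.Partition 0).parts_pos hx
          have : x ≤ (default : Nat.Partition 0).parts.sum := Multiset.le_sum_of_mem hx
          omega
        rw [this]
        simp [zms]
      · have hrec := Spart_rec hm
        have hb : ∑ j ∈ Finset.Icc 1 m, Spart (m - j) ≤ (m : ℝ) := by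
          calc ∑ j ∈ Finset.Icc 1 m, Spart (m - j) ≤ ∑ j ∈ Finset.Icc 1 m, 1 := by
                apply Finset.sum_le_sum
                intro j hj
                obtain ⟨h1, h2⟩ := Finset.mem_Icc.mp hj
                exact ih (m - j) (by omega)
            _ = (m : ℝ) := by simp
        have hmpos : (0 : ℝ) < m := by exact_mod_cast hm
        nlinarith [hrec]





lemma fwt_eq (m : ℕ) (lam : Nat.Partition m) :
    fwt m lam = 2 ^ (Lparts m lam) * zms m lam.parts := by
  rw [fwt, zms, Lparts, ← Finset.prod_pow_eq_pow_sum, ← Finset.prod_mul_distrib]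
  apply Finset.prod_congr rfl
  intro i _
  rw [mul_pow]
  ring

lemma fwt_le (m : ℕ) (lam : Nat.Partition m) :
    fwt m lam ≤ (2 * m) ^ (Lparts m lam) := by
  rw [fwt, Lparts, ← Finset.prod_pow_eq_pow_sum]
  apply Finset.prod_le_prod'
  intro i _
  set c := lam.parts.count i with hc
  calc (2 * i) ^ c * c.factorial ≤ (2 * i) ^ c * c ^ c :=
        Nat.mul_le_mul_left _ (Nat.factorial_le_pow c)
    _ = (2 * i * c) ^ c := by rw [mul_pow, mul_pow]; ring
    _ ≤ (2 * m) ^ c := by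
        apply Nat.pow_le_pow_left
        have h1 : c * i ≤ m := by
          have := count_mul_le lam.parts i
          rwa [lam.parts_sum] at this
        calc 2 * i * c = 2 * (c * i) := by ring
          _ ≤ 2 * m := Nat.mul_le_mul_left 2 h1

lemma fwt_pos (m : ℕ) (lam : Nat.Partition m) : 0 < fwt m lam := by
  apply Finset.prod_pos
  intro i hi
  have h1 : 1 ≤ i := (Finset.mem_Icc.mp hi).1
  exact Nat.mul_pos (Nat.pow_pos (by omega)) (Nat.factorial_pos _)







lemma pdens_le (m : ℕ) (hm : 1 ≤ m) (lam : Nat.Partition m) :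
    Pdens m lam ≤ 2 * Real.sqrt m * ((fwt m lam : ℝ))⁻¹ := by
  have hfpos : (0 : ℝ) < (fwt m lam : ℝ) := by exact_mod_cast fwt_pos m lam
  have hfactpos : (0 : ℝ) < (Nat.factorial m : ℝ) := by exact_mod_cast Nat.factorial_pos m
  have hCBpos : (0 : ℝ) < (Nat.centralBinom m : ℝ) := by exact_mod_cast Nat.centralBinom_pos m
  have hfact : ((2 * m).factorial : ℝ) = (Nat.centralBinom m : ℝ) * ((m.factorial : ℝ))^2 := by
    have h := Nat.choose_mul_factorial_mul_factorial (Nat.le_mul_of_pos_left m (by norm_num : 0 < 2))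
    have h2 : 2 * m - m = m := by omega
    rw [h2] at h
    have hcast : ((2 * m).factorial : ℝ)
        = ((2 * m).choose m : ℝ) * (m.factorial : ℝ) * (m.factorial : ℝ) := by
      exact_mod_cast congrArg (Nat.cast : ℕ → ℝ) h.symm
    rw [Nat.centralBinom_eq_two_mul_choose, hcast]
    push_cast
    ring
  have h4 : (2 : ℝ) ^ (2 * m) = 4 ^ m := by
    rw [pow_mul]; norm_num
  rw [Pdens, hfact, h4]
  rw [div_le_iff₀ (by positivity)]
  have hw := wallis m hm
  calc (4:ℝ) ^ m * (Nat.factorial m : ℝ)^2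
      ≤ (2 * Real.sqrt m * (Nat.centralBinom m : ℝ)) * (Nat.factorial m : ℝ)^2 := by
        exact mul_le_mul_of_nonneg_right hw (by positivity)
    _ = 2 * Real.sqrt m * (fwt m lam : ℝ)⁻¹ * ((Nat.centralBinom m : ℝ) * (Nat.factorial m : ℝ)^2 * (fwt m lam : ℝ)) := by
        field_simp

lemma inv_fwt_le (m : ℕ) (hm : 2 ≤ m) (lam : Nat.Partition m)
    (hf : Real.exp ((Real.log m) ^ 2) < (fwt m lam : ℝ)) :
    ((fwt m lam : ℝ))⁻¹
      ≤ Real.exp (-(Real.log 2 / Real.log (2 * m)) * (Real.log m) ^ 2)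
        * ((zms m lam.parts : ℝ))⁻¹ := by
  set s : ℝ := Real.log 2 / Real.log (2 * m) with hs
  have hmR : (2 : ℝ) ≤ (m : ℝ) := by exact_mod_cast hm
  have hlog2m : (0 : ℝ) < Real.log (2 * m) := Real.log_pos (by linarith)
  have hspos : 0 < s := div_pos (Real.log_pos (by norm_num)) hlog2m
  have hfpos : (0 : ℝ) < (fwt m lam : ℝ) := by exact_mod_cast fwt_pos m lam
  have hzpos : (0 : ℝ) < (zms m lam.parts : ℝ) := by exact_mod_cast zms_pos m lam.parts
  set L := Lparts m lam with hL
  -- (2m)^s = 2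
  have h2ms : ((2 : ℝ) * m) ^ s = 2 := by
    rw [Real.rpow_def_of_pos (by linarith)]
    rw [hs, mul_div_cancel₀ _ (ne_of_gt hlog2m)]
    exact Real.exp_log (by norm_num)
  -- F^s ≤ 2^L
  have hFle : (fwt m lam : ℝ) ≤ ((2 : ℝ) * m) ^ (L : ℕ) := by
    have := fwt_le m lam
    have h2 : ((2 * m : ℕ) : ℝ) = 2 * (m : ℝ) := by push_cast; ring
    calc (fwt m lam : ℝ) ≤ (((2 * m) ^ L : ℕ) : ℝ) := by exact_mod_cast this
      _ = ((2:ℝ) * m) ^ (L : ℕ) := by push_cast; ring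
  have hFs : (fwt m lam : ℝ) ^ s ≤ 2 ^ (L : ℕ) := by
    calc (fwt m lam : ℝ) ^ s ≤ (((2:ℝ) * m) ^ (L : ℕ)) ^ s :=
          Real.rpow_le_rpow hfpos.le hFle hspos.le
      _ = (((2:ℝ) * m) ^ s) ^ (L : ℕ) := by
          rw [← Real.rpow_natCast ((2:ℝ)*m) L, ← Real.rpow_natCast (((2:ℝ)*m) ^ s) L,
            ← Real.rpow_mul (by linarith), ← Real.rpow_mul (by linarith), mul_comm (L:ℝ) s]
      _ = 2 ^ (L : ℕ) := by rw [h2ms]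
  -- exp((log m)^2 * s) ≤ F^s
  have hTs : Real.exp ((Real.log m) ^ 2 * s) ≤ (fwt m lam : ℝ) ^ s := by
    have : Real.exp ((Real.log m) ^ 2 * s) = (Real.exp ((Real.log m)^2)) ^ s := by
      rw [Real.rpow_def_of_pos (Real.exp_pos _), Real.log_exp]
    rw [this]
    exact Real.rpow_le_rpow (Real.exp_pos _).le hf.le hspos.le
  -- combine: exp((log m)^2 * s) * z ≤ 2^L * z = F
  have hkey : Real.exp ((Real.log m) ^ 2 * s) * (zms m lam.parts : ℝ) ≤ (fwt m lam : ℝ) := by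
    have hFz : (fwt m lam : ℝ) = 2 ^ (L : ℕ) * (zms m lam.parts : ℝ) := by
      exact_mod_cast congrArg (Nat.cast : ℕ → ℝ) (fwt_eq m lam)
    rw [hFz]
    exact mul_le_mul_of_nonneg_right (hTs.trans hFs) hzpos.le
  have hrw : Real.exp (-s * (Real.log m) ^ 2) = (Real.exp ((Real.log m) ^ 2 * s))⁻¹ := by
    rw [← Real.exp_neg]
    congr 1
    ring
  rw [hrw]
  calc ((fwt m lam : ℝ))⁻¹
      ≤ (Real.exp ((Real.log m) ^ 2 * s) * (zms m lam.parts : ℝ))⁻¹ :=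
        inv_anti₀ (by positivity) hkey
    _ = (Real.exp ((Real.log m) ^ 2 * s))⁻¹ * ((zms m lam.parts : ℝ))⁻¹ := mul_inv _ _


lemma bound_exp (m : ℕ) (hm : 2 ≤ m) :
    2 * Real.sqrt m * Real.exp (-(Real.log 2 / Real.log (2 * m)) * (Real.log m) ^ 2)
      ≤ (2 * Real.exp ((Real.log 2) ^ 2)) * (m : ℝ) ^ ((1:ℝ)/2 - Real.log 2) := by
  have hmR : (2:ℝ) ≤ (m : ℝ) := by exact_mod_cast hm
  have hm0 : (0:ℝ) < (m : ℝ) := by linarith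
  have hlogm : 0 < Real.log m := Real.log_pos (by linarith)
  have hlog2 : 0 < Real.log 2 := Real.log_pos (by norm_num)
  have hlog2m : Real.log (2 * m) = Real.log 2 + Real.log m :=
    Real.log_mul (by norm_num) (ne_of_gt hm0)
  have hlog2mpos : 0 < Real.log (2 * (m:ℝ)) := by rw [hlog2m]; linarith
  have hexp : -(Real.log 2 / Real.log (2 * m)) * (Real.log m) ^ 2
      ≤ (Real.log 2) ^ 2 - Real.log 2 * Real.log m := by
    have h1 : -(Real.log 2 / Real.log (2 * (m:ℝ))) * (Real.log m) ^ 2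
        = (-(Real.log 2 * (Real.log m) ^ 2)) / Real.log (2 * (m:ℝ)) := by ring
    rw [h1, div_le_iff₀ hlog2mpos, hlog2m]
    nlinarith [sq_nonneg (Real.log 2), hlog2.le, pow_pos hlog2 3]
  have hsqrt : Real.sqrt m = (m : ℝ) ^ ((1:ℝ)/2) := Real.sqrt_eq_rpow _
  have hrpow : (m : ℝ) ^ (-Real.log 2) = Real.exp (-(Real.log 2) * Real.log m) := by
    rw [Real.rpow_def_of_pos hm0]
    congr 1
    ring
  have hsplit : Real.exp ((Real.log 2) ^ 2 - Real.log 2 * Real.log m)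
      = Real.exp ((Real.log 2) ^ 2) * (m : ℝ) ^ (-Real.log 2) := by
    rw [hrpow, ← Real.exp_add]
    congr 1
    ring
  have hcomb : (m : ℝ) ^ ((1:ℝ)/2) * (m : ℝ) ^ (-Real.log 2)
      = (m : ℝ) ^ ((1:ℝ)/2 - Real.log 2) := by
    rw [← Real.rpow_add hm0]
    congr 1
  calc 2 * Real.sqrt m * Real.exp (-(Real.log 2 / Real.log (2 * m)) * (Real.log m) ^ 2)
      ≤ 2 * Real.sqrt m * Real.exp ((Real.log 2) ^ 2 - Real.log 2 * Real.log m) := by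
        apply mul_le_mul_of_nonneg_left (Real.exp_le_exp.mpr hexp) (by positivity)
    _ = (2 * Real.exp ((Real.log 2) ^ 2)) * ((m : ℝ) ^ ((1:ℝ)/2) * (m : ℝ) ^ (-Real.log 2)) := by
        rw [hsqrt, hsplit]
        ring
    _ = (2 * Real.exp ((Real.log 2) ^ 2)) * (m : ℝ) ^ ((1:ℝ)/2 - Real.log 2) := by rw [hcomb]

lemma pdens_nonneg (m : ℕ) (lam : Nat.Partition m) : 0 ≤ Pdens m lam := by
  rw [Pdens]; positivity

/-- Right tail: there is a constant `C > 0` such that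
`P({λ ⊢ m : f(λ) > C·m^{log m}}) → 0` as `m → ∞`, where `m^{log m} = exp((log m)²)`. -/
theorem right_tail_tendsto_zero :
    ∃ C : ℝ, 0 < C ∧
      Tendsto
        (fun m : ℕ =>
          ∑ lam ∈ Finset.univ.filter
              (fun lam : Nat.Partition m =>
                (fwt m lam : ℝ) > C * Real.exp ((Real.log m) ^ 2)),
            Pdens m lam)
        atTop (nhds 0) := by
  refine ⟨1, one_pos, ?_⟩
  set K : ℝ := 2 * Real.exp ((Real.log 2) ^ 2) with hK
  have hg : Tendsto (fun m : ℕ => K * (m:ℝ) ^ ((1:ℝ)/2 - Real.log 2)) atTop (nhds 0) := by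
    have hy : 0 < Real.log 2 - 1/2 := by
      have := Real.log_two_gt_d9
      norm_num at this ⊢
      linarith
    have h1 : Tendsto (fun x : ℝ => x ^ (-(Real.log 2 - 1/2))) atTop (nhds 0) :=
      tendsto_rpow_neg_atTop hy
    have h2 : Tendsto (fun m : ℕ => ((m:ℝ)) ^ (-(Real.log 2 - 1/2))) atTop (nhds 0) :=
      h1.comp tendsto_natCast_atTop_atTop
    have h3 : ((1:ℝ)/2 - Real.log 2) = -(Real.log 2 - 1/2) := by ring
    rw [h3]
    simpa using h2.const_mul K
  apply squeeze_zero' _ _ hg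
  · exact Eventually.of_forall
      (fun m => Finset.sum_nonneg (fun lam _ => pdens_nonneg m lam))
  · filter_upwards [eventually_ge_atTop 2] with m hm
    set B : ℝ := 2 * Real.sqrt m
      * Real.exp (-(Real.log 2 / Real.log (2 * m)) * (Real.log m) ^ 2) with hB
    have hBnn : 0 ≤ B := by positivity
    have hm1 : 1 ≤ m := by omega
    calc (∑ lam ∈ Finset.univ.filter
            (fun lam : Nat.Partition m =>
              (fwt m lam : ℝ) > 1 * Real.exp ((Real.log m) ^ 2)),
          Pdens m lam)
        ≤ ∑ lam ∈ Finset.univ.filter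
            (fun lam : Nat.Partition m =>
              (fwt m lam : ℝ) > 1 * Real.exp ((Real.log m) ^ 2)),
            B * ((zms m lam.parts : ℝ))⁻¹ := by
          apply Finset.sum_le_sum
          intro lam hlam
          have hcond : Real.exp ((Real.log m) ^ 2) < (fwt m lam : ℝ) := by
            have := (Finset.mem_filter.mp hlam).2
            rwa [one_mul] at this
          have h1 := pdens_le m hm1 lam
          have h2 := inv_fwt_le m hm lam hcond
          calc Pdens m lam ≤ 2 * Real.sqrt m * ((fwt m lam : ℝ))⁻¹ := h1
            _ ≤ 2 * Real.sqrt m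
                * (Real.exp (-(Real.log 2 / Real.log (2 * m)) * (Real.log m) ^ 2)
                    * ((zms m lam.parts : ℝ))⁻¹) := by
                apply mul_le_mul_of_nonneg_left h2 (by positivity)
            _ = B * ((zms m lam.parts : ℝ))⁻¹ := by rw [hB]; ring
      _ = B * ∑ lam ∈ Finset.univ.filter
            (fun lam : Nat.Partition m =>
              (fwt m lam : ℝ) > 1 * Real.exp ((Real.log m) ^ 2)),
            ((zms m lam.parts : ℝ))⁻¹ := by rw [Finset.mul_sum]
      _ ≤ B * Spart m := by
          apply mul_le_mul_of_nonneg_left _ hBnn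
          rw [Spart]
          apply Finset.sum_le_sum_of_subset_of_nonneg (Finset.filter_subset _ _)
          intro lam _ _
          have := zms_pos m lam.parts
          positivity
      _ ≤ B := by
          have h := Spart_le_one m
          nlinarith [hBnn]
      _ ≤ K * (m:ℝ) ^ ((1:ℝ)/2 - Real.log 2) := by
          rw [hB, hK]
          exact bound_exp m hm
end

section
/- For a positive integer m and real β, let W_{β,m} = Σ_{λ ⊢ m} f(λ)^{−β}, where f(λ) = ∏_{i=1}^{m}(2i)^{r_i}·r_i! and r_i is the number of parts of λ equal to i. Then for every fixed β > 0, W_{β,m}^{1/m} → 1 as m → ∞. Consequently, the power series Σ_{m≥0} W_{β,m} z^m has radius of convergence exactly 1. -/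
open Filter

/-- `W_{β,m} = Σ_{λ ⊢ m} f(λ)^{−β}` (real exponents); note `W_{β,0} = 1`. -/
noncomputable def Wsum (β : ℝ) (m : ℕ) : ℝ :=
  ∑ lam : Nat.Partition m, (fwt m lam : ℝ) ^ (-β)

lemma one_le_fwt (m : ℕ) (lam : Nat.Partition m) : 1 ≤ fwt m lam := by
  refine Finset.one_le_prod' fun i hi => ?_
  have h1 : 1 ≤ 2 * i := by
    have := (Finset.mem_Icc.mp hi).1; omega
  exact Nat.one_le_iff_ne_zero.mpr (Nat.mul_ne_zero (pow_ne_zero _ (by omega))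
    (Nat.factorial_ne_zero _))

lemma part_mem_Icc {m : ℕ} (lam : Nat.Partition m) {a : ℕ} (ha : a ∈ lam.parts) :
    a ∈ Finset.Icc 1 m := by
  refine Finset.mem_Icc.mpr ⟨lam.parts_pos ha, ?_⟩
  calc a ≤ lam.parts.sum := Multiset.le_sum_of_mem ha  -- check name
  _ = m := lam.parts_sum

lemma count_le {m : ℕ} (lam : Nat.Partition m) (i : ℕ) : lam.parts.count i ≤ m := by
  have h1 : Multiset.card lam.parts • 1 ≤ lam.parts.sum :=
    Multiset.card_nsmul_le_sum fun x hx => lam.parts_pos hx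
  simp only [smul_eq_mul, mul_one] at h1
  calc lam.parts.count i ≤ Multiset.card lam.parts := Multiset.count_le_card _ _
  _ ≤ lam.parts.sum := h1
  _ = m := lam.parts_sum

lemma sum_count_eq_s16 {m : ℕ} (lam : Nat.Partition m) :
    ∑ i ∈ Finset.Icc 1 m, i * lam.parts.count i = m := by
  have h := Multiset.toFinset_sum_count_nsmul_eq lam.parts
  have h2 : (∑ i ∈ lam.parts.toFinset, lam.parts.count i • ({i} : Multiset ℕ)).sum
      = lam.parts.sum := by rw [h]
  rw [Multiset.sum_sum] at h2
  simp only [Multiset.sum_nsmul, Multiset.sum_singleton, smul_eq_mul] at h2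
  have h3 : ∑ x ∈ Finset.Icc 1 m, Multiset.count x lam.parts * x = lam.parts.sum := by
    rw [← h2]
    refine (Finset.sum_subset (fun a ha => part_mem_Icc lam (Multiset.mem_toFinset.mp ha))
      fun x _ hx => ?_).symm
    simp [Multiset.count_eq_zero_of_notMem (fun h => hx (Multiset.mem_toFinset.mpr h))]
  calc ∑ i ∈ Finset.Icc 1 m, i * Multiset.count i lam.parts
      = ∑ i ∈ Finset.Icc 1 m, Multiset.count i lam.parts * i :=
        Finset.sum_congr rfl fun i _ => mul_comm _ _
  _ = lam.parts.sum := h3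
  _ = m := lam.parts_sum

lemma geom_partial_le {x : ℝ} (h0 : 0 ≤ x) (h1 : x < 1) (n : ℕ) :
    ∑ r ∈ Finset.range n, x ^ r ≤ (1 - x)⁻¹ := by
  have hne : x ≠ 1 := ne_of_lt h1
  have hpos : 0 < 1 - x := by linarith
  rw [geom_sum_eq hne, div_le_iff_of_neg (by linarith : x - 1 < 0)]
  have h2 : (1 - x)⁻¹ * (x - 1) = -1 := by field_simp; ring
  rw [h2]
  nlinarith [pow_nonneg h0 n]

lemma card_partition_le (m : ℕ) (z : ℝ) (hz0 : 0 < z) (hz1 : z < 1) :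
    (Fintype.card (Nat.Partition m) : ℝ) * z ^ m ≤ Real.exp (((1 - z)⁻¹) ^ 2) := by
  classical
  set s : Finset ℕ := Finset.Icc 1 m with hs
  -- step 1 : card * z^m = sum over partitions of product
  have hterm : ∀ lam : Nat.Partition m,
      (z : ℝ) ^ m = ∏ i ∈ s, (z ^ i) ^ (lam.parts.count i) := by
    intro lam
    have : ∏ i ∈ s, (z ^ i) ^ (lam.parts.count i) = ∏ i ∈ s, z ^ (i * lam.parts.count i) := by
      refine Finset.prod_congr rfl fun i _ => ?_
      rw [← pow_mul]
    rw [this, Finset.prod_pow_eq_pow_sum, sum_count_eq_s16 lam]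
  have step1 : (Fintype.card (Nat.Partition m) : ℝ) * z ^ m
      = ∑ lam : Nat.Partition m, ∏ i ∈ s, (z ^ i) ^ (lam.parts.count i) := by
    rw [Finset.sum_congr rfl fun lam _ => (hterm lam).symm]
    simp [Finset.card_univ, mul_comm]
  -- the injection into pi-sets
  set P := s.pi (fun _ => Finset.range (m + 1)) with hP
  let Φ : Nat.Partition m → ((i : ℕ) → i ∈ s → ℕ) := fun lam i _ => lam.parts.count i
  have hΦmem : ∀ lam, Φ lam ∈ P := by
    intro lam
    rw [hP, Finset.mem_pi]
    intro i hi
    exact Finset.mem_range.mpr (Nat.lt_succ_of_le (count_le lam i))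
  have hΦinj : Function.Injective Φ := by
    intro a b hab
    ext1
    ext j
    by_cases hj : j ∈ s
    · exact congrFun (congrFun hab j) hj
    · rw [Multiset.count_eq_zero_of_notMem, Multiset.count_eq_zero_of_notMem]
      · exact fun h => hj (part_mem_Icc b h)
      · exact fun h => hj (part_mem_Icc a h)
  let g : ((i : ℕ) → i ∈ s → ℕ) → ℝ := fun p => ∏ x ∈ s.attach, (z ^ (x : ℕ)) ^ (p x x.2)
  have hgnonneg : ∀ p, 0 ≤ g p := by
    intro p
    exact Finset.prod_nonneg fun x _ => pow_nonneg (pow_nonneg hz0.le _) _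
  have step2 : ∑ lam : Nat.Partition m, ∏ i ∈ s, (z ^ i) ^ (lam.parts.count i)
      ≤ ∑ p ∈ P, g p := by
    have : ∀ lam : Nat.Partition m, ∏ i ∈ s, (z ^ i) ^ (lam.parts.count i) = g (Φ lam) := by
      intro lam
      rw [← Finset.prod_attach s (fun i => (z ^ i) ^ (lam.parts.count i))]
    rw [Finset.sum_congr rfl fun lam _ => this lam, ← Finset.sum_image
      (fun a _ b _ h => hΦinj h)]
    refine Finset.sum_le_sum_of_subset_of_nonneg ?_ fun p hp _ => hgnonneg p
    intro p hp
    obtain ⟨lam, _, rfl⟩ := Finset.mem_image.mp hp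
    exact hΦmem lam
  have step3 : ∑ p ∈ P, g p = ∏ i ∈ s, ∑ r ∈ Finset.range (m + 1), (z ^ i) ^ r := by
    rw [Finset.prod_sum]
  have step4 : ∏ i ∈ s, ∑ r ∈ Finset.range (m + 1), (z ^ i) ^ r
      ≤ ∏ i ∈ s, Real.exp (z ^ i * (1 - z)⁻¹) := by
    refine Finset.prod_le_prod (fun i _ => Finset.sum_nonneg fun r _ =>
      pow_nonneg (pow_nonneg hz0.le _) _) fun i hi => ?_
    have hzi0 : 0 ≤ z ^ i := pow_nonneg hz0.le _
    have hzile : z ^ i ≤ z := by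
      calc z ^ i ≤ z ^ 1 := pow_le_pow_of_le_one hz0.le hz1.le (Finset.mem_Icc.mp hi).1
      _ = z := pow_one z
    have hzi1 : z ^ i < 1 := lt_of_le_of_lt hzile hz1
    calc ∑ r ∈ Finset.range (m + 1), (z ^ i) ^ r ≤ (1 - z ^ i)⁻¹ :=
          geom_partial_le hzi0 hzi1 _
    _ ≤ Real.exp (z ^ i * (1 - z ^ i)⁻¹) := by
        have hpos : (0:ℝ) < 1 - z ^ i := by linarith
        have key : (1 - z ^ i)⁻¹ = z ^ i * (1 - z ^ i)⁻¹ + 1 := by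
          field_simp
          ring
        have h2 := Real.add_one_le_exp (z ^ i * (1 - z ^ i)⁻¹)
        linarith
    _ ≤ Real.exp (z ^ i * (1 - z)⁻¹) := by
        refine Real.exp_le_exp.mpr (mul_le_mul_of_nonneg_left ?_ hzi0)
        have h1 : (0:ℝ) < 1 - z ^ i := by linarith
        have h2 : (0:ℝ) < 1 - z := by linarith
        exact inv_anti₀ h2 (by linarith)
  have step5 : ∏ i ∈ s, Real.exp (z ^ i * (1 - z)⁻¹) ≤ Real.exp (((1 - z)⁻¹) ^ 2) := by
    rw [← Real.exp_sum]
    refine Real.exp_le_exp.mpr ?_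
    rw [← Finset.sum_mul]
    have hsum : ∑ i ∈ s, z ^ i ≤ (1 - z)⁻¹ := by
      calc ∑ i ∈ s, z ^ i ≤ ∑ i ∈ Finset.range (m + 1), z ^ i := by
            refine Finset.sum_le_sum_of_subset_of_nonneg ?_
              (fun i _ _ => pow_nonneg hz0.le _)
            intro i hi
            rw [Finset.mem_range]
            exact Nat.lt_succ_of_le (Finset.mem_Icc.mp hi).2
      _ ≤ (1 - z)⁻¹ := geom_partial_le hz0.le hz1 _
    calc (∑ i ∈ s, z ^ i) * (1 - z)⁻¹ ≤ (1 - z)⁻¹ * (1 - z)⁻¹ := by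
          refine mul_le_mul_of_nonneg_right hsum (inv_nonneg.mpr (by linarith))
    _ = ((1 - z)⁻¹) ^ 2 := (sq _).symm
  calc (Fintype.card (Nat.Partition m) : ℝ) * z ^ m
      = ∑ lam : Nat.Partition m, ∏ i ∈ s, (z ^ i) ^ (lam.parts.count i) := step1
  _ ≤ ∑ p ∈ P, g p := step2
  _ = ∏ i ∈ s, ∑ r ∈ Finset.range (m + 1), (z ^ i) ^ r := step3
  _ ≤ ∏ i ∈ s, Real.exp (z ^ i * (1 - z)⁻¹) := step4
  _ ≤ Real.exp (((1 - z)⁻¹) ^ 2) := step5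

lemma Wsum_pos (β : ℝ) (m : ℕ) : 0 < Wsum β m := by
  refine Finset.sum_pos (fun lam _ => Real.rpow_pos_of_pos ?_ _) ⟨default, Finset.mem_univ _⟩
  exact_mod_cast Nat.lt_of_lt_of_le Nat.zero_lt_one (one_le_fwt m lam)

lemma Wsum_le_card (β : ℝ) (hβ : 0 < β) (m : ℕ) :
    Wsum β m ≤ (Fintype.card (Nat.Partition m) : ℝ) := by
  have : ∀ lam : Nat.Partition m, (fwt m lam : ℝ) ^ (-β) ≤ 1 := fun lam =>
    Real.rpow_le_one_of_one_le_of_nonpos (by exact_mod_cast one_le_fwt m lam) (by linarith)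
  calc Wsum β m ≤ ∑ _lam : Nat.Partition m, (1:ℝ) := Finset.sum_le_sum fun lam _ => this lam
  _ = (Fintype.card (Nat.Partition m) : ℝ) := by simp [Finset.card_univ]

lemma fwt_indiscrete (m : ℕ) (hm : 1 ≤ m) : fwt m (Nat.Partition.indiscrete m) = 2 * m := by
  unfold fwt
  rw [Nat.Partition.indiscrete_parts (by omega)]
  rw [Finset.prod_eq_single m]
  · simp [Multiset.count_singleton]
  · intro i hi hne
    simp [Multiset.count_singleton, hne]
  · intro h
    exact absurd (Finset.mem_Icc.mpr ⟨hm, le_refl m⟩) h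

lemma Wsum_lower (β : ℝ) (m : ℕ) (hm : 1 ≤ m) :
    ((2 * m : ℕ) : ℝ) ^ (-β) ≤ Wsum β m := by
  have hpos : ∀ lam : Nat.Partition m, (0:ℝ) ≤ (fwt m lam : ℝ) ^ (-β) := by
    intro lam
    have h1 : (0:ℝ) < (fwt m lam : ℝ) := by
      exact_mod_cast Nat.lt_of_lt_of_le Nat.zero_lt_one (one_le_fwt m lam)
    exact (Real.rpow_pos_of_pos h1 _).le
  have := Finset.single_le_sum (f := fun lam : Nat.Partition m => (fwt m lam : ℝ) ^ (-β))
    (fun lam _ => hpos lam) (Finset.mem_univ (Nat.Partition.indiscrete m))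
  rw [fwt_indiscrete m hm] at this
  exact this

lemma tendsto_sqrt_nat : Tendsto Nat.sqrt atTop atTop := by
  refine tendsto_atTop_atTop.mpr fun b => ⟨b * b, fun a ha => Nat.le_sqrt.mpr ha⟩

lemma log_Wsum_div_tendsto (β : ℝ) (hβ : 0 < β) :
    Tendsto (fun m : ℕ => Real.log (Wsum β m) / m) atTop (nhds 0) := by
  set k : ℕ → ℕ := fun m => Nat.sqrt (Nat.sqrt m) + 2 with hk
  -- upper bound
  have hub : ∀ m : ℕ, 1 ≤ m →
      Real.log (Wsum β m) / m ≤ ((k m : ℝ) - 1)⁻¹ + 9 / (Nat.sqrt m : ℝ) := by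
    intro m hm
    set K : ℝ := (k m : ℝ) with hK
    have hK2 : (2:ℝ) ≤ K := by
      rw [hK]; exact_mod_cast Nat.le_add_left 2 _
    set z : ℝ := 1 - K⁻¹ with hz
    have hKpos : (0:ℝ) < K := by linarith
    have hKinv : K⁻¹ ≤ 1/2 := by
      rw [show (1:ℝ)/2 = (2:ℝ)⁻¹ by norm_num]
      exact inv_anti₀ (by norm_num) hK2
    have hKinvpos : 0 < K⁻¹ := inv_pos.mpr hKpos
    have hz0 : 0 < z := by rw [hz]; linarith
    have hz1 : z < 1 := by rw [hz]; linarith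
    have hcard := card_partition_le m z hz0 hz1
    have hWpos := Wsum_pos β m
    have hWz : Wsum β m * z ^ m ≤ Real.exp (K ^ 2) := by
      have h1 : (1 - z)⁻¹ = K := by rw [hz]; simp [inv_inv]
      rw [← h1]
      calc Wsum β m * z ^ m ≤ (Fintype.card (Nat.Partition m) : ℝ) * z ^ m :=
            mul_le_mul_of_nonneg_right (Wsum_le_card β hβ m) (pow_nonneg hz0.le _)
      _ ≤ Real.exp (((1 - z)⁻¹) ^ 2) := hcard
    -- take logs
    have hlog : Real.log (Wsum β m) + m * Real.log z ≤ K ^ 2 := by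
      have h2 : Real.log (Wsum β m * z ^ m) ≤ K ^ 2 := by
        calc Real.log (Wsum β m * z ^ m) ≤ Real.log (Real.exp (K ^ 2)) :=
              Real.log_le_log (mul_pos hWpos (pow_pos hz0 m)) hWz
        _ = K ^ 2 := Real.log_exp _
      rwa [Real.log_mul (ne_of_gt hWpos) (ne_of_gt (pow_pos hz0 m)), Real.log_pow] at h2
    have hnlz : -Real.log z ≤ (K - 1)⁻¹ := by
      have hzeq : z = (K - 1) / K := by rw [hz]; field_simp
      have hK1 : (0:ℝ) < K - 1 := by linarith
      rw [← Real.log_inv]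
      have hinv : z⁻¹ = K / (K - 1) := by rw [hzeq]; rw [inv_div]
      rw [hinv]
      have := Real.log_le_sub_one_of_pos (show (0:ℝ) < K / (K - 1) by positivity)
      calc Real.log (K / (K - 1)) ≤ K / (K - 1) - 1 := this
      _ = (K - 1)⁻¹ := by field_simp; ring
    have hmpos : (0:ℝ) < m := by exact_mod_cast hm
    have hK2m : K ^ 2 ≤ 9 * (Nat.sqrt m : ℝ) := by
      have hnat : (k m) ^ 2 ≤ 9 * Nat.sqrt m := by
        have hs2 : Nat.sqrt (Nat.sqrt m) * Nat.sqrt (Nat.sqrt m) ≤ Nat.sqrt m := by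
          have := Nat.sqrt_le' (Nat.sqrt m); nlinarith [this]
        have hsle : Nat.sqrt (Nat.sqrt m) ≤ Nat.sqrt m := Nat.sqrt_le_self _
        have hs1 : 1 ≤ Nat.sqrt m := Nat.one_le_iff_ne_zero.mpr (by
          intro h
          have := Nat.sqrt_eq_zero.mp h
          omega)
        show (Nat.sqrt (Nat.sqrt m) + 2) ^ 2 ≤ 9 * Nat.sqrt m
        nlinarith [Nat.sqrt_le_self (Nat.sqrt m)]
      have : ((k m : ℕ) : ℝ) ^ 2 ≤ ((9 * Nat.sqrt m : ℕ) : ℝ) := by exact_mod_cast hnat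
      rw [hK]
      push_cast at this ⊢
      linarith
    have hsq : (0:ℝ) < (Nat.sqrt m : ℝ) := by
      have : 1 ≤ Nat.sqrt m := Nat.one_le_iff_ne_zero.mpr (by
        intro h; have := Nat.sqrt_eq_zero.mp h; omega)
      exact_mod_cast this
    have hsqm : (Nat.sqrt m : ℝ) * (Nat.sqrt m : ℝ) ≤ (m:ℝ) := by
      have := Nat.sqrt_le' m
      have h4 : Nat.sqrt m * Nat.sqrt m ≤ m := by nlinarith [this]
      exact_mod_cast h4
    -- combine
    rw [div_le_iff₀ hmpos]
    have hfinal : Real.log (Wsum β m) ≤ m * (K - 1)⁻¹ + 9 * (Nat.sqrt m : ℝ) := by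
      have := hlog
      have h3 : -(m * Real.log z) ≤ m * (K - 1)⁻¹ := by
        rw [← mul_neg]
        exact mul_le_mul_of_nonneg_left hnlz hmpos.le
      linarith
    calc Real.log (Wsum β m) ≤ m * (K - 1)⁻¹ + 9 * (Nat.sqrt m : ℝ) := hfinal
    _ ≤ m * (K - 1)⁻¹ + (9 / (Nat.sqrt m : ℝ)) * m := by
        have : 9 * (Nat.sqrt m : ℝ) ≤ (9 / (Nat.sqrt m : ℝ)) * m := by
          rw [div_mul_eq_mul_div, le_div_iff₀ hsq]
          nlinarith
        linarith
    _ = ((K - 1)⁻¹ + 9 / (Nat.sqrt m : ℝ)) * m := by ring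
  -- lower bound
  have hlb : ∀ m : ℕ, 1 ≤ m →
      -β * Real.log (2 * (m:ℝ)) / m ≤ Real.log (Wsum β m) / m := by
    intro m hm
    have hmpos : (0:ℝ) < m := by exact_mod_cast hm
    have h2mpos : (0:ℝ) < ((2 * m : ℕ) : ℝ) := by positivity
    have h1 := Wsum_lower β m hm
    have h2 : Real.log (((2 * m : ℕ) : ℝ) ^ (-β)) ≤ Real.log (Wsum β m) :=
      Real.log_le_log (Real.rpow_pos_of_pos h2mpos _) h1
    rw [Real.log_rpow h2mpos] at h2
    have h3 : -β * Real.log (2 * (m:ℝ)) ≤ Real.log (Wsum β m) := by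
      push_cast at h2
      exact h2
    gcongr
  -- tendsto of bounds
  have hsq2 : Tendsto (fun m : ℕ => Nat.sqrt (Nat.sqrt m)) atTop atTop :=
    tendsto_sqrt_nat.comp tendsto_sqrt_nat
  have hU : Tendsto (fun m : ℕ => ((k m : ℝ) - 1)⁻¹ + 9 / (Nat.sqrt m : ℝ)) atTop (nhds 0) := by
    have h1 : Tendsto (fun m : ℕ => ((k m : ℝ) - 1)) atTop atTop := by
      have hc : Tendsto (fun m : ℕ => ((Nat.sqrt (Nat.sqrt m) : ℕ) : ℝ)) atTop atTop :=
        tendsto_natCast_atTop_atTop.comp hsq2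
      have := tendsto_atTop_add_const_right atTop (1:ℝ) hc
      refine this.congr fun m => ?_
      rw [hk]
      push_cast
      ring
    have h2 : Tendsto (fun m : ℕ => ((k m : ℝ) - 1)⁻¹) atTop (nhds 0) :=
      tendsto_inv_atTop_zero.comp h1
    have h3 : Tendsto (fun m : ℕ => 9 / (Nat.sqrt m : ℝ)) atTop (nhds 0) := by
      have hc : Tendsto (fun m : ℕ => ((Nat.sqrt m : ℕ) : ℝ)) atTop atTop :=
        tendsto_natCast_atTop_atTop.comp tendsto_sqrt_nat
      have h4 : Tendsto (fun m : ℕ => ((Nat.sqrt m : ℝ))⁻¹) atTop (nhds 0) :=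
        tendsto_inv_atTop_zero.comp hc
      have := h4.const_mul (9:ℝ)
      simpa [div_eq_mul_inv] using this
    simpa using h2.add h3
  have hL : Tendsto (fun m : ℕ => -β * Real.log (2 * (m:ℝ)) / m) atTop (nhds 0) := by
    have hlog0 : Tendsto (fun x : ℝ => Real.log x / x) atTop (nhds 0) :=
      Real.isLittleO_log_id_atTop.tendsto_div_nhds_zero
    have h2m : Tendsto (fun m : ℕ => 2 * (m:ℝ)) atTop atTop := by
      have := tendsto_natCast_atTop_atTop (R := ℝ)
      exact Tendsto.const_mul_atTop two_pos this
    have hT : Tendsto (fun m : ℕ => Real.log (2 * (m:ℝ)) / (2 * (m:ℝ))) atTop (nhds 0) :=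
      hlog0.comp h2m
    have := hT.const_mul (-2 * β)
    rw [mul_zero] at this
    refine this.congr' ?_
    filter_upwards [eventually_ge_atTop 1] with m hm
    have hmpos : (0:ℝ) < m := by exact_mod_cast hm
    field_simp
  refine tendsto_of_tendsto_of_tendsto_of_le_of_le' hL hU ?_ ?_
  · filter_upwards [eventually_ge_atTop 1] with m hm
    exact hlb m hm
  · filter_upwards [eventually_ge_atTop 1] with m hm
    exact hub m hm

lemma Wsum_rpow_tendsto (β : ℝ) (hβ : 0 < β) :
    Tendsto (fun m : ℕ => Wsum β m ^ ((m : ℝ)⁻¹)) atTop (nhds 1) := by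
  have h := (Real.continuous_exp.tendsto 0).comp (log_Wsum_div_tendsto β hβ)
  rw [Real.exp_zero] at h
  refine h.congr fun m => ?_
  rw [Function.comp_apply, Real.rpow_def_of_pos (Wsum_pos β m), div_eq_mul_inv]

lemma summable_part (β : ℝ) (hβ : 0 < β) (z : ℝ) (hz : |z| < 1) :
    Summable (fun m : ℕ => Wsum β m * z ^ m) := by
  by_cases hz0 : z = 0
  · subst hz0
    refine summable_of_ne_finset_zero (s := {0}) fun m hm => ?_
    have : m ≠ 0 := by simpa using hm
    simp [zero_pow this]
  · have hzpos : 0 < |z| := abs_pos.mpr hz0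
    set r : ℝ := (1 + |z|) / 2 with hr
    have hr1 : r < 1 := by rw [hr]; linarith
    have hrz : |z| < r := by rw [hr]; linarith
    have hrpos : 0 < r := by rw [hr]; linarith
    set c : ℝ := r / |z| with hc
    have hc1 : 1 < c := (one_lt_div hzpos).mpr hrz
    have hev := (Wsum_rpow_tendsto β hβ).eventually_lt_const hc1
    rw [eventually_atTop] at hev
    obtain ⟨N0, hN0⟩ := hev
    set N := max N0 1 with hN
    -- bound for m ≥ N : |Wsum β m * z ^ m| ≤ r ^ m
    have hbound : ∀ m, N ≤ m → |Wsum β m * z ^ m| ≤ r ^ m := by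
      intro m hm
      have hm1 : 1 ≤ m := le_trans (le_max_right _ _) hm
      have hmN0 : N0 ≤ m := le_trans (le_max_left _ _) hm
      have hW := (hN0 m hmN0).le
      have hWpos := Wsum_pos β m
      have hWle : Wsum β m ≤ c ^ m := by
        have h1 : (Wsum β m ^ ((m:ℝ)⁻¹)) ^ m ≤ c ^ m :=
          pow_le_pow_left₀ (Real.rpow_nonneg hWpos.le _) hW m
        rwa [← Real.rpow_natCast (Wsum β m ^ ((m:ℝ)⁻¹)) m, ← Real.rpow_mul hWpos.le,
          inv_mul_cancel₀ (Nat.cast_ne_zero.mpr (by omega) : (m:ℝ) ≠ 0),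
          Real.rpow_one] at h1
      rw [abs_mul, abs_pow]
      calc |Wsum β m| * |z| ^ m = Wsum β m * |z| ^ m := by rw [abs_of_pos hWpos]
      _ ≤ c ^ m * |z| ^ m := by
          exact mul_le_mul_of_nonneg_right hWle (pow_nonneg (abs_nonneg z) m)
      _ = (c * |z|) ^ m := (mul_pow c |z| m).symm
      _ = r ^ m := by rw [hc, div_mul_cancel₀ r (ne_of_gt hzpos)]
    refine Summable.of_abs ?_
    rw [← summable_nat_add_iff N]
    refine Summable.of_nonneg_of_le (fun m => abs_nonneg _)
      (fun m => hbound (m + N) (Nat.le_add_left N m)) ?_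
    have : Summable (fun m : ℕ => r ^ N * r ^ m) :=
      (summable_geometric_of_lt_one hrpos.le hr1).mul_left _
    refine this.congr fun m => ?_
    rw [← pow_add, add_comm]

lemma not_summable_part (β : ℝ) (hβ : 0 < β) (z : ℝ) (hz : 1 < |z|) :
    ¬ Summable (fun m : ℕ => Wsum β m * z ^ m) := by
  intro hsum
  have hten := hsum.tendsto_atTop_zero
  have habs : Tendsto (fun m : ℕ => |Wsum β m * z ^ m|) atTop (nhds 0) := by
    have := hten.abs
    simpa using this
  -- lower bound eventually ≥ 1
  set k : ℕ := ⌈β⌉₊ with hk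
  have hβk : β ≤ (k : ℝ) := Nat.le_ceil β
  have hzpos : (0:ℝ) < |z| := by linarith
  set r : ℝ := |z|⁻¹ with hr
  have hr1 : r < 1 := by
    rw [hr]
    exact inv_lt_one_of_one_lt₀ hz
  have hrpos : 0 < r := inv_pos.mpr hzpos
  have hsummable : Summable (fun m : ℕ => (m:ℝ) ^ k * r ^ m) := by
    have : ‖r‖ < 1 := by rwa [Real.norm_eq_abs, abs_of_pos hrpos]
    exact summable_pow_mul_geometric_of_norm_lt_one k this
  have htzero : Tendsto (fun m : ℕ => (2:ℝ) ^ k * ((m:ℝ) ^ k * r ^ m)) atTop (nhds 0) := by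
    have := hsummable.tendsto_atTop_zero.const_mul ((2:ℝ) ^ k)
    simpa using this
  have hev : ∀ᶠ m : ℕ in atTop, (2:ℝ) ^ k * ((m:ℝ) ^ k * r ^ m) < 1 :=
    htzero.eventually_lt_const one_pos
  have hev2 : ∀ᶠ m : ℕ in atTop, (1:ℝ) ≤ |Wsum β m * z ^ m| := by
    filter_upwards [hev, eventually_ge_atTop 1] with m hm hm1
    have hmpos : (1:ℝ) ≤ m := by exact_mod_cast hm1
    have h2m1 : (1:ℝ) ≤ 2 * (m:ℝ) := by linarith
    -- (2m)^β ≤ (2m)^k ≤ |z|^m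
    have hstep1 : ((2 * m : ℕ) : ℝ) ^ (-β) * |z| ^ m ≥ 1 := by
      have hA : ((2 * m : ℕ) : ℝ) ^ (β:ℝ) ≤ ((2 * m : ℕ) : ℝ) ^ (k:ℝ) := by
        refine Real.rpow_le_rpow_of_exponent_le ?_ hβk
        push_cast; linarith
      have hB : ((2 * m : ℕ) : ℝ) ^ (k:ℝ) = (2 * (m:ℝ)) ^ k := by
        rw [Real.rpow_natCast]; push_cast; ring
      have hC : (2 * (m:ℝ)) ^ k * r ^ m < 1 := by
        calc (2 * (m:ℝ)) ^ k * r ^ m = (2:ℝ) ^ k * ((m:ℝ) ^ k * r ^ m) := by ring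
        _ < 1 := hm
      have hD : (2 * (m:ℝ)) ^ k ≤ |z| ^ m := by
        rw [hr] at hC
        have hzm : (0:ℝ) < |z| ^ m := pow_pos hzpos m
        have : (2 * (m:ℝ)) ^ k * (|z| ^ m)⁻¹ < 1 := by
          rwa [inv_pow] at hC
        calc (2 * (m:ℝ)) ^ k = (2 * (m:ℝ)) ^ k * (|z| ^ m)⁻¹ * |z| ^ m := by
              field_simp
        _ ≤ 1 * |z| ^ m := mul_le_mul_of_nonneg_right this.le hzm.le
        _ = |z| ^ m := one_mul _
      have hE : ((2 * m : ℕ) : ℝ) ^ (β:ℝ) ≤ |z| ^ m := by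
        calc ((2 * m : ℕ) : ℝ) ^ (β:ℝ) ≤ ((2 * m : ℕ) : ℝ) ^ (k:ℝ) := hA
        _ = (2 * (m:ℝ)) ^ k := hB
        _ ≤ |z| ^ m := hD
      have h2mpos : (0:ℝ) < ((2 * m : ℕ) : ℝ) := by push_cast; linarith
      have hpow : (0:ℝ) < ((2 * m : ℕ) : ℝ) ^ (β:ℝ) := Real.rpow_pos_of_pos h2mpos _
      rw [ge_iff_le, Real.rpow_neg h2mpos.le]
      calc (1:ℝ) = (((2 * m : ℕ) : ℝ) ^ (β:ℝ))⁻¹ * ((2 * m : ℕ) : ℝ) ^ (β:ℝ) :=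
            (inv_mul_cancel₀ hpow.ne').symm
      _ ≤ (((2 * m : ℕ) : ℝ) ^ (β:ℝ))⁻¹ * |z| ^ m :=
            mul_le_mul_of_nonneg_left hE (inv_nonneg.mpr hpow.le)
    have hWlow := Wsum_lower β m hm1
    have hWpos := Wsum_pos β m
    have hzmnn : (0:ℝ) ≤ |z| ^ m := pow_nonneg (abs_nonneg z) m
    calc (1:ℝ) ≤ ((2 * m : ℕ) : ℝ) ^ (-β) * |z| ^ m := hstep1
    _ ≤ Wsum β m * |z| ^ m := mul_le_mul_of_nonneg_right hWlow hzmnn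
    _ = |Wsum β m * z ^ m| := by
        rw [abs_mul, abs_of_pos hWpos, abs_pow]
  -- contradiction
  have hlt := habs.eventually_lt_const (by norm_num : (0:ℝ) < 1)
  obtain ⟨m, h1, h2⟩ := (hev2.and hlt).exists
  linarith

/-- For every `β > 0`, `W_{β,m}^{1/m} → 1` as `m → ∞`; consequently the power series
`Σ_{m≥0} W_{β,m} z^m` has radius of convergence exactly `1` (it converges for `|z| < 1`
and diverges for `|z| > 1`). -/
theorem Wsum_radius_one (β : ℝ) (hβ : 0 < β) :
    Tendsto (fun m : ℕ => Wsum β m ^ ((m : ℝ)⁻¹)) atTop (nhds 1) ∧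
      (∀ z : ℝ, |z| < 1 → Summable (fun m : ℕ => Wsum β m * z ^ m)) ∧
      (∀ z : ℝ, 1 < |z| → ¬ Summable (fun m : ℕ => Wsum β m * z ^ m)) := by
  exact ⟨Wsum_rpow_tendsto β hβ, fun z hz => summable_part β hβ z hz,
    fun z hz => not_summable_part β hβ z hz⟩
end

section
/- For real β > 0, define I_β(w) = Σ_{j≥0} w^j/(j!)^β (an entire function), and for a positive integer m let W_{β,m} = Σ_{λ ⊢ m} f(λ)^{−β}, where f(λ) = ∏_{i=1}^{m}(2i)^{r_i}·r_i! and r_i is the number of parts of λ equal to i, with W_{β,0} = 1. Then for every real z with 0 ≤ z < 1, the series Σ_{m≥0} W_{β,m} z^m converges, the infinite product ∏_{i≥1} I_β(z^i/(2i)^β) converges, and the two are equal: Σ_{m≥0} W_{β,m} z^m = ∏_{i=1}^{∞} I_β(z^i/(2i)^β). -/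
/-! Auxiliary definitions and lemmas -/

noncomputable def gterm (β z : ℝ) (i j : ℕ) : ℝ :=
  (z ^ i / (2 * (i:ℝ)) ^ β) ^ j / (Nat.factorial j : ℝ) ^ β

section gtermLemmas
variable {β z : ℝ} {i j : ℕ}

lemma wt_nonneg (hz0 : 0 ≤ z) (i : ℕ) : 0 ≤ z ^ i / (2 * (i:ℝ)) ^ β :=
  div_nonneg (pow_nonneg hz0 i) (Real.rpow_nonneg (by positivity) β)

lemma fact_rpow_one_le (hβ : 0 < β) (j : ℕ) : (1:ℝ) ≤ (Nat.factorial j : ℝ) ^ β :=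
  Real.one_le_rpow (by exact_mod_cast Nat.one_le_iff_ne_zero.mpr (Nat.factorial_ne_zero j)) hβ.le

lemma wt_le (hβ : 0 < β) (hz0 : 0 ≤ z) (hi : 1 ≤ i) :
    z ^ i / (2 * (i:ℝ)) ^ β ≤ z ^ i := by
  apply div_le_self (pow_nonneg hz0 i)
  have h1 : (1:ℝ) ≤ (i:ℝ) := by exact_mod_cast hi
  exact Real.one_le_rpow (by nlinarith) hβ.le

lemma wt_le_z (hβ : 0 < β) (hz0 : 0 ≤ z) (hz1 : z < 1) (hi : 1 ≤ i) :
    z ^ i / (2 * (i:ℝ)) ^ β ≤ z :=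
  (wt_le hβ hz0 hi).trans (pow_le_of_le_one hz0 hz1.le (by omega))

lemma gterm_nonneg (hz0 : 0 ≤ z) (i j : ℕ) : 0 ≤ gterm β z i j :=
  div_nonneg (pow_nonneg (wt_nonneg hz0 i) j) (Real.rpow_nonneg (by positivity) β)

lemma gterm_zero (i : ℕ) : gterm β z i 0 = 1 := by
  simp [gterm]

lemma gterm_le (hβ : 0 < β) (hz0 : 0 ≤ z) (hz1 : z < 1) (hi : 1 ≤ i) (j : ℕ) :
    gterm β z i j ≤ z ^ j := by
  calc gterm β z i j ≤ (z ^ i / (2 * (i:ℝ)) ^ β) ^ j :=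
        div_le_self (pow_nonneg (wt_nonneg hz0 i) j) (fact_rpow_one_le hβ j)
    _ ≤ z ^ j := pow_le_pow_left₀ (wt_nonneg hz0 i) (wt_le_z hβ hz0 hz1 hi) j

lemma gterm_summable (hβ : 0 < β) (hz0 : 0 ≤ z) (hz1 : z < 1) (hi : 1 ≤ i) :
    Summable (gterm β z i) :=
  Summable.of_nonneg_of_le (gterm_nonneg hz0 i) (gterm_le hβ hz0 hz1 hi)
    (summable_geometric_of_lt_one hz0 hz1)

lemma one_le_tsum_gterm (hβ : 0 < β) (hz0 : 0 ≤ z) (hz1 : z < 1) (hi : 1 ≤ i) :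
    1 ≤ ∑' j, gterm β z i j := by
  have := (gterm_summable hβ hz0 hz1 hi).le_tsum 0 (fun j _ => gterm_nonneg hz0 i j)
  rwa [gterm_zero] at this

lemma tsum_gterm_le (hβ : 0 < β) (hz0 : 0 ≤ z) (hz1 : z < 1) (hi : 1 ≤ i) :
    ∑' j, gterm β z i j ≤ 1 + z ^ i * (1 - z)⁻¹ := by
  have hs := gterm_summable hβ hz0 hz1 hi
  rw [hs.tsum_eq_zero_add, gterm_zero]
  gcongr
  have hg : Summable (fun j : ℕ => z ^ i * z ^ j) :=
    (summable_geometric_of_lt_one hz0 hz1).mul_left _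
  have hle : ∀ j : ℕ, gterm β z i (j + 1) ≤ z ^ i * z ^ j := by
    intro j
    have h1 : gterm β z i (j+1) ≤ (z ^ i / (2 * (i:ℝ)) ^ β) ^ (j+1) :=
      div_le_self (pow_nonneg (wt_nonneg hz0 i) _) (fact_rpow_one_le hβ _)
    have h2 : (z ^ i / (2 * (i:ℝ)) ^ β) ^ (j+1) ≤ z ^ i * z ^ j := by
      rw [pow_succ, mul_comm]
      exact mul_le_mul (wt_le hβ hz0 hi)
        (pow_le_pow_left₀ (wt_nonneg hz0 i) (wt_le_z hβ hz0 hz1 hi) j)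
        (pow_nonneg (wt_nonneg hz0 i) j) (pow_nonneg hz0 i)
    exact h1.trans h2
  calc ∑' j, gterm β z i (j+1) ≤ ∑' j : ℕ, z ^ i * z ^ j :=
        ((summable_nat_add_iff 1).mpr hs).tsum_le_tsum hle hg
    _ = z ^ i * (1 - z)⁻¹ := by
        rw [tsum_mul_left, tsum_geometric_of_lt_one hz0 hz1]

lemma gterm_eq (r : ℕ) :
    gterm β z i r = z ^ (i * r) * (((2 * i) ^ r * r.factorial : ℕ) : ℝ) ^ (-β) := by
  have hB : (0:ℝ) ≤ 2 * (i:ℝ) := by positivity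
  have hBr : (0:ℝ) ≤ (2 * (i:ℝ)) ^ r := pow_nonneg hB r
  have hf : (0:ℝ) ≤ (r.factorial : ℝ) := Nat.cast_nonneg _
  rw [gterm, div_pow, ← pow_mul, div_div,
    ← Real.rpow_natCast ((2 * (i:ℝ)) ^ β) r, ← Real.rpow_mul hB, mul_comm β (r:ℝ),
    Real.rpow_mul hB, Real.rpow_natCast, ← Real.mul_rpow hBr hf,
    div_eq_mul_inv, ← Real.rpow_neg (mul_nonneg hBr hf)]
  push_cast
  ring_nf

end gtermLemmas

/-- `I_β(w) = Σ_{j≥0} w^j/(j!)^β`. -/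
noncomputable def Ifun (β : ℝ) (w : ℝ) : ℝ :=
  ∑' j : ℕ, w ^ j / (Nat.factorial j : ℝ) ^ β

section prodFormula
variable {β z : ℝ}

lemma prod_gterm_eq {m : ℕ} (p : Nat.Partition m) {s : Finset ℕ}
    (hs : p.parts.toFinset ⊆ s) :
    ∏ i ∈ s, gterm β z i (p.parts.count i) = (fwt m p : ℝ) ^ (-β) * z ^ m := by
  classical
  set A := p.parts.toFinset with hA
  have hcount : ∀ x ∉ A, p.parts.count x = 0 := fun x hx =>
    Multiset.count_eq_zero_of_notMem (by simpa [hA, Multiset.mem_toFinset] using hx)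
  have step1 : ∏ i ∈ s, gterm β z i (p.parts.count i)
      = ∏ i ∈ A, gterm β z i (p.parts.count i) := by
    refine (Finset.prod_subset hs fun x _ hx => ?_).symm
    rw [hcount x hx, gterm_zero]
  have hAm : A ⊆ Finset.Icc 1 m := by
    intro a ha
    rw [hA, Multiset.mem_toFinset] at ha
    refine Finset.mem_Icc.mpr ⟨p.parts_pos ha, ?_⟩
    calc a ≤ p.parts.sum := Multiset.single_le_sum (fun x _ => Nat.zero_le x) a ha
      _ = m := p.parts_sum
  have step2 : (fwt m p : ℕ)
      = ∏ i ∈ A, (2 * i) ^ (p.parts.count i) * Nat.factorial (p.parts.count i) := by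
    refine (Finset.prod_subset hAm fun x _ hx => ?_).symm
    rw [hcount x hx]
    simp
  have hsum : ∑ i ∈ A, i * p.parts.count i = m := by
    have h := Finset.sum_multiset_map_count p.parts (id : ℕ → ℕ)
    simp only [Multiset.map_id', smul_eq_mul, id_eq] at h
    calc ∑ i ∈ A, i * p.parts.count i = ∑ x ∈ A, p.parts.count x * x :=
          Finset.sum_congr rfl fun x _ => mul_comm x _
      _ = p.parts.sum := h.symm
      _ = m := p.parts_sum
  rw [step1]
  calc ∏ i ∈ A, gterm β z i (p.parts.count i)
      = ∏ i ∈ A, (z ^ (i * p.parts.count i) *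
          (((2 * i) ^ (p.parts.count i) * (p.parts.count i).factorial : ℕ) : ℝ) ^ (-β)) :=
        Finset.prod_congr rfl fun i _ => gterm_eq _
    _ = (∏ i ∈ A, z ^ (i * p.parts.count i)) *
          ∏ i ∈ A, (((2 * i) ^ (p.parts.count i) * (p.parts.count i).factorial : ℕ) : ℝ) ^ (-β) :=
        Finset.prod_mul_distrib
    _ = (fwt m p : ℝ) ^ (-β) * z ^ m := by
        rw [Finset.prod_pow_eq_pow_sum, hsum,
          Real.finset_prod_rpow A _ (fun i _ => by positivity) (-β), mul_comm]
        congr 2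
        rw [step2]
        push_cast
        rfl

end prodFormula

/-! The combinatorial equivalence -/

def toMS (N : ℕ) (d : Fin N → ℕ) : Multiset ℕ :=
  ∑ i : Fin N, Multiset.replicate (d i) ((i : ℕ) + 1)

lemma toMS_count (N : ℕ) (d : Fin N → ℕ) (i : Fin N) :
    (toMS N d).count ((i : ℕ) + 1) = d i := by
  classical
  rw [toMS, Multiset.count_sum']
  rw [Finset.sum_eq_single i]
  · simp [Multiset.count_replicate]
  · intro j _ hj
    rw [Multiset.count_replicate, if_neg]
    intro h
    exact hj (Fin.ext (by omega))
  · simp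

lemma toMS_count_zero (N : ℕ) (d : Fin N → ℕ) {k : ℕ} (hk : k = 0 ∨ N < k) :
    (toMS N d).count k = 0 := by
  classical
  rw [toMS, Multiset.count_sum']
  refine Finset.sum_eq_zero fun j _ => ?_
  rw [Multiset.count_replicate, if_neg]
  have := j.isLt
  omega

lemma toMS_pos (N : ℕ) (d : Fin N → ℕ) {a : ℕ} (ha : a ∈ toMS N d) : 0 < a := by
  rw [toMS, Multiset.mem_sum] at ha
  obtain ⟨i, _, hi⟩ := ha
  rw [Multiset.eq_of_mem_replicate hi]
  omega

lemma toMS_le (N : ℕ) (d : Fin N → ℕ) {a : ℕ} (ha : a ∈ toMS N d) : a ≤ N := by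
  rw [toMS, Multiset.mem_sum] at ha
  obtain ⟨i, _, hi⟩ := ha
  rw [Multiset.eq_of_mem_replicate hi]
  exact i.isLt

/-- pack a multiset of positive naturals as a point of the partition sigma type -/
def mkP (s : Multiset ℕ) (hs : ∀ a ∈ s, 0 < a) : Σ m, Nat.Partition m :=
  ⟨s.sum, ⟨s, fun h => hs _ h, rfl⟩⟩

lemma mkP_eq {s t : Multiset ℕ} (h : s = t) (hs : ∀ a ∈ s, 0 < a) (ht : ∀ a ∈ t, 0 < a) :
    mkP s hs = mkP t ht := by subst h; rfl

lemma mkP_self {m : ℕ} (p : Nat.Partition m) (h : ∀ a ∈ p.parts, 0 < a) :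
    mkP p.parts h = ⟨m, p⟩ := by
  obtain ⟨parts, pos, rfl⟩ := p
  rfl

/-- the equivalence between multiplicity vectors and partitions with parts `≤ N` -/
noncomputable def eN (N : ℕ) :
    (Fin N → ℕ) ≃ {x : Σ m, Nat.Partition m // ∀ a ∈ x.2.parts, a ≤ N} where
  toFun d := ⟨mkP (toMS N d) (fun _ h => toMS_pos N d h), fun a ha => toMS_le N d ha⟩
  invFun x := fun i => x.1.2.parts.count ((i : ℕ) + 1)
  left_inv d := by
    funext i
    exact toMS_count N d i
  right_inv := by
    rintro ⟨⟨m, p⟩, hp⟩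
    apply Subtype.ext
    show mkP _ _ = _
    have hparts : toMS N (fun i => p.parts.count ((i : ℕ) + 1)) = p.parts := by
      ext k
      rcases Nat.eq_zero_or_pos k with rfl | hk0
      · rw [toMS_count_zero N _ (Or.inl rfl)]
        symm
        rw [Multiset.count_eq_zero]
        intro h
        exact absurd (p.parts_pos h) (lt_irrefl 0)
      · rcases le_or_gt k N with hkN | hkN
        · have : k = ((⟨k - 1, by omega⟩ : Fin N) : ℕ) + 1 := by simp; omega
          rw [this, toMS_count N _ ⟨k - 1, by omega⟩]
        · rw [toMS_count_zero N _ (Or.inr hkN)]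
          symm
          rw [Multiset.count_eq_zero]
          intro h
          exact absurd (hp k h) (by omega)
    rw [mkP_eq hparts _ (fun a ha => p.parts_pos ha), mkP_self]

/-! The `N`-fold products -/

/-- product of `gterm`s along a multiplicity vector -/
noncomputable def TN (β z : ℝ) (N : ℕ) (d : Fin N → ℕ) : ℝ :=
  ∏ i : Fin N, gterm β z ((i : ℕ) + 1) (d i)

section TNLemmas
variable {β z : ℝ} {N : ℕ}

lemma TN_nonneg (hz0 : 0 ≤ z) (N : ℕ) (d : Fin N → ℕ) : 0 ≤ TN β z N d :=
  Finset.prod_nonneg fun i _ => gterm_nonneg hz0 _ _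

lemma TN_snoc (N : ℕ) (d : Fin N → ℕ) (a : ℕ) :
    TN β z (N + 1) (Fin.snoc d a) = gterm β z (N + 1) a * TN β z N d := by
  rw [TN, Fin.prod_univ_castSucc]
  simp only [Fin.snoc_castSucc, Fin.snoc_last, Fin.coe_castSucc, Fin.val_last]
  rw [mul_comm]
  rfl

lemma TN_claim (hβ : 0 < β) (hz0 : 0 ≤ z) (hz1 : z < 1) :
    ∀ N, Summable (TN β z N) ∧
      ∑' d, TN β z N d = ∏ i ∈ Finset.range N, ∑' j, gterm β z (i + 1) j := by
  intro N
  induction N with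
  | zero =>
      constructor
      · exact Summable.of_finite
      · rw [tsum_fintype]
        simp [TN]
  | succ N ih =>
      have hg := gterm_summable hβ hz0 hz1 (Nat.le_add_left 1 N)
      have hprod : Summable (fun p : ℕ × (Fin N → ℕ) =>
          gterm β z (N + 1) p.1 * TN β z N p.2) :=
        hg.mul_of_nonneg ih.1 (fun j => gterm_nonneg hz0 _ j) (fun d => TN_nonneg hz0 N d)
      have he : ∀ p : ℕ × (Fin N → ℕ),
          TN β z (N + 1) ((Fin.snocEquiv (fun _ => ℕ)) p) =
            gterm β z (N + 1) p.1 * TN β z N p.2 := by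
        rintro ⟨a, d⟩
        have : ((Fin.snocEquiv (fun _ => ℕ)) (a, d)) = Fin.snoc d a := rfl
        rw [this, TN_snoc]
      have hsum : Summable (TN β z (N + 1)) := by
        rw [← (Fin.snocEquiv (fun _ => ℕ)).summable_iff]
        exact hprod.congr fun p => (he p).symm
      refine ⟨hsum, ?_⟩
      rw [Finset.prod_range_succ, ← ih.2, mul_comm,
        Summable.tsum_mul_tsum hg ih.1 hprod,
        ← (Fin.snocEquiv (fun _ => ℕ)).tsum_eq (TN β z (N + 1))]
      exact tsum_congr he

end TNLemmas

/-- For `β > 0` and `0 ≤ z < 1`, the series `Σ_{m≥0} W_{β,m} z^m` converges, the infinite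
product `∏_{i≥1} I_β(z^i/(2i)^β)` converges, and they are equal. -/
theorem Wsum_generating_function_eq_prod (β : ℝ) (hβ : 0 < β)
    (z : ℝ) (hz0 : 0 ≤ z) (hz1 : z < 1) :
    Summable (fun m : ℕ => Wsum β m * z ^ m) ∧
      Multipliable (fun i : ℕ => Ifun β (z ^ (i + 1) / (2 * ((i : ℝ) + 1)) ^ β)) ∧
      ∑' m : ℕ, Wsum β m * z ^ m =
        ∏' i : ℕ, Ifun β (z ^ (i + 1) / (2 * ((i : ℝ) + 1)) ^ β) := by
  classical
  set F : ℕ → ℝ := fun i => Ifun β (z ^ (i + 1) / (2 * ((i : ℝ) + 1)) ^ β) with hF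
  have hIg : ∀ i : ℕ, F i = ∑' j, gterm β z (i + 1) j := by
    intro i
    show (∑' j : ℕ, (z ^ (i + 1) / (2 * ((i : ℝ) + 1)) ^ β) ^ j / (Nat.factorial j : ℝ) ^ β)
      = ∑' j, gterm β z (i + 1) j
    refine tsum_congr fun j => ?_
    rw [gterm]
    push_cast
    ring_nf
  -- the summand over the sigma type of all partitions
  set t : (Σ m, Nat.Partition m) → ℝ := fun x => (fwt x.1 x.2 : ℝ) ^ (-β) * z ^ x.1 with htdef
  have ht_nonneg : ∀ x, 0 ≤ t x := fun x =>
    mul_nonneg (Real.rpow_nonneg (Nat.cast_nonneg _) _) (pow_nonneg hz0 _)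
  -- partial products
  set P : ℕ → ℝ := fun N => ∏ i ∈ Finset.range N, F i with hPdef
  have hclaim := TN_claim hβ hz0 hz1 (z := z)
  have hPsum : ∀ N, P N = ∑' d, TN β z N d := by
    intro N
    rw [hPdef, (hclaim N).2]
    exact (Finset.prod_congr rfl fun i _ => hIg i)
  -- t at points of the equivalence
  have ht_eN : ∀ N (d : Fin N → ℕ), t ((eN N d).1) = TN β z N d := by
    intro N d
    have h1 : (eN N d).1 = mkP (toMS N d) (fun _ h => toMS_pos N d h) := rfl
    rw [h1]
    have h2 : t (mkP (toMS N d) (fun _ h => toMS_pos N d h)) =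
        (fwt (toMS N d).sum ⟨toMS N d, fun h => toMS_pos N d h, rfl⟩ : ℝ) ^ (-β)
          * z ^ (toMS N d).sum := rfl
    rw [h2]
    set p : Nat.Partition (toMS N d).sum := ⟨toMS N d, fun h => toMS_pos N d h, rfl⟩ with hp
    have hsub : p.parts.toFinset ⊆ (Finset.range N).image (· + 1) := by
      intro a ha
      rw [Multiset.mem_toFinset] at ha
      have h3 := toMS_pos N d ha
      have h4 := toMS_le N d ha
      exact Finset.mem_image.mpr ⟨a - 1, Finset.mem_range.mpr (by omega), by omega⟩
    have := prod_gterm_eq (β := β) (z := z) p hsub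
    rw [← this, Finset.prod_image (fun x _ y _ h => by omega), TN,
      ← Fin.prod_univ_eq_prod_range (fun i => gterm β z (i + 1) (p.parts.count (i + 1))) N]
    refine Finset.prod_congr rfl fun i _ => ?_
    congr 1
    exact toMS_count N d i
  -- basic bounds on the factors
  have hF1 : ∀ i, 1 ≤ F i := fun i => by
    rw [hIg i]; exact one_le_tsum_gterm hβ hz0 hz1 (Nat.le_add_left 1 i)
  have hc0 : (0:ℝ) ≤ (1 - z)⁻¹ := inv_nonneg.mpr (by linarith)
  have hFle : ∀ i, F i ≤ 1 + z ^ i * (1 - z)⁻¹ := by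
    intro i
    rw [hIg i]
    refine (tsum_gterm_le hβ hz0 hz1 (Nat.le_add_left 1 i)).trans ?_
    have hzz : z ^ (i + 1) ≤ z ^ i := pow_le_pow_of_le_one hz0 hz1.le (Nat.le_succ i)
    nlinarith [mul_le_mul_of_nonneg_right hzz hc0]
  -- uniform bound on partial products
  set C : ℝ := Real.exp ((1 - z)⁻¹ * (1 - z)⁻¹) with hC
  have hPC : ∀ N, P N ≤ C := by
    intro N
    have h1 : P N ≤ ∏ i ∈ Finset.range N, Real.exp (z ^ i * (1 - z)⁻¹) := by
      refine Finset.prod_le_prod (fun i _ => by linarith [hF1 i]) fun i _ => ?_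
      refine (hFle i).trans ?_
      have := Real.add_one_le_exp (z ^ i * (1 - z)⁻¹)
      linarith
    refine h1.trans ?_
    rw [← Real.exp_sum]
    apply Real.exp_le_exp.mpr
    rw [← Finset.sum_mul]
    have h2 : ∑ i ∈ Finset.range N, z ^ i ≤ (1 - z)⁻¹ := by
      refine ((summable_geometric_of_lt_one hz0 hz1).sum_le_tsum (Finset.range N) (fun i _ => pow_nonneg hz0 i)
        ).trans ?_
      rw [tsum_geometric_of_lt_one hz0 hz1]
    exact mul_le_mul_of_nonneg_right h2 hc0
  have hP1 : ∀ N, (1:ℝ) ≤ P N := by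
    intro N
    show (1:ℝ) ≤ ∏ i ∈ Finset.range N, F i
    induction N with
    | zero => simp
    | succ n ih =>
        rw [Finset.prod_range_succ]
        nlinarith [hF1 n, ih]
  -- finite sums of t are bounded by partial products
  have hsum_le : ∀ u : Finset (Σ m, Nat.Partition m),
      ∑ x ∈ u, t x ≤ P (u.sup fun x => x.1) := by
    intro u
    set N := u.sup fun x => x.1 with hN
    have hmem : ∀ x ∈ u, ∀ a ∈ (x.2 : Nat.Partition x.1).parts, a ≤ N := by
      intro x hx a ha
      calc a ≤ x.2.parts.sum := Multiset.single_le_sum (fun y _ => Nat.zero_le y) a ha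
        _ = x.1 := x.2.parts_sum
        _ ≤ N := Finset.le_sup hx
    set φ : {x // x ∈ u} → (Fin N → ℕ) :=
      fun x => (eN N).symm ⟨x.1, hmem x.1 x.2⟩ with hφ
    have hφinj : Function.Injective φ := by
      intro x y hxy
      have h2 := congrArg (eN N) hxy
      rw [Equiv.apply_symm_apply, Equiv.apply_symm_apply] at h2
      rw [Subtype.mk.injEq] at h2
      exact Subtype.ext h2
    have hval : ∀ x : {x // x ∈ u}, t x.1 = TN β z N (φ x) := by
      intro x
      have : (eN N) (φ x) = ⟨x.1, hmem x.1 x.2⟩ := Equiv.apply_symm_apply _ _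
      rw [← ht_eN N (φ x), this]
    calc ∑ x ∈ u, t x = ∑ x ∈ u.attach, t x.1 := (Finset.sum_attach u t).symm
      _ = ∑ x ∈ u.attach, TN β z N (φ x) := Finset.sum_congr rfl fun x _ => hval x
      _ = ∑ d ∈ u.attach.image φ, TN β z N d :=
          (Finset.sum_image fun x _ y _ h => hφinj h).symm
      _ ≤ ∑' d, TN β z N d :=
          (hclaim N).1.sum_le_tsum _ (fun d _ => TN_nonneg hz0 N d)
      _ = P N := (hPsum N).symm
  -- summability of t
  have ht_sum : Summable t :=
    summable_of_sum_le ht_nonneg fun u => (hsum_le u).trans (hPC _)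
  set L : ℝ := ∑' x, t x with hL
  -- partial products are bounded by L
  have hPleL : ∀ N, P N ≤ L := by
    intro N
    rw [hPsum N, hL]
    refine (hclaim N).1.tsum_le_tsum_of_inj (fun d => (eN N d).1)
      (fun d d' h => (eN N).injective (Subtype.ext h))
      (fun x _ => ht_nonneg x) (fun d => (ht_eN N d).ge) ht_sum
  -- monotonicity of partial products
  have hPmono : Monotone P := by
    apply monotone_nat_of_le_succ
    intro N
    show (∏ i ∈ Finset.range N, F i) ≤ ∏ i ∈ Finset.range (N + 1), F i
    rw [Finset.prod_range_succ]
    exact le_mul_of_one_le_right (by linarith [hP1 N]) (hF1 N)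
  have hbdd : BddAbove (Set.range P) := ⟨L, by rintro _ ⟨N, rfl⟩; exact hPleL N⟩
  have htendsup : Filter.Tendsto P Filter.atTop (nhds (⨆ N, P N)) :=
    tendsto_atTop_ciSup hPmono hbdd
  have hsupL : (⨆ N, P N) = L := by
    refine le_antisymm (ciSup_le hPleL) ?_
    refine le_of_tendsto' ht_sum.hasSum fun u => ?_
    exact (hsum_le u).trans (le_ciSup hbdd _)
  have htendL : Filter.Tendsto P Filter.atTop (nhds L) := hsupL ▸ htendsup
  -- multipliability
  have hlogsum : Summable fun i => Real.log (F i) := by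
    have hgs : Summable (fun i : ℕ => z ^ i * (1 - z)⁻¹) :=
      (summable_geometric_of_lt_one hz0 hz1).mul_right _
    refine Summable.of_nonneg_of_le (fun i => Real.log_nonneg (hF1 i)) (fun i => ?_) hgs
    have h1 : Real.log (F i) ≤ F i - 1 :=
      Real.log_le_sub_one_of_pos (by linarith [hF1 i])
    have h2 := hFle i
    linarith
  have hmult : Multipliable F := by
    exact Real.multipliable_of_summable_log
      (fun i => by linarith [hF1 i]) hlogsum
  have htprod : ∏' i, F i = L :=
    tendsto_nhds_unique hmult.hasProd.tendsto_prod_nat htendL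
  -- the sigma tsum equals the generating function
  have hfib : ∀ m : ℕ, ∑' lam : Nat.Partition m, t ⟨m, lam⟩ = Wsum β m * z ^ m := by
    intro m
    rw [tsum_fintype, Wsum, Finset.sum_mul]
  have hWsummable : Summable (fun m : ℕ => Wsum β m * z ^ m) := by
    have := ht_sum.sigma
    exact this.congr hfib
  refine ⟨hWsummable, hmult, ?_⟩
  have : ∑' m : ℕ, Wsum β m * z ^ m = L := by
    rw [hL, ht_sum.tsum_sigma]
    exact tsum_congr fun m => (hfib m).symm
  rw [this, htprod]
end
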